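/- arXiv:0901.0984 — 5 statements merged into one kernel-verified Lean document; each statement's English description precedes it below -/
import Mathlib

section
/- Let S be a closed subset of a Hilbert space H and x ∈ S. A unit vector v belongs to the proximal normal cone N(S,x) if and only if v belongs to the proximal subdifferential ∂^P d_S(x) of the distance function d_S at x. More generally, ∂^P d_S(x) = N(S,x) ∩ B̄(0,1). -/
open Metric RealInnerProductSpace

/-- The (possibly multivalued) metric projection onto a set. -/
def projSet {H : Type*} [NormedAddCommGroup H] (S : Set H) (x : H) : Set H :=
  {z | z ∈ S ∧ dist x z = Metric.infDist x S}

/-- The proximal normal cone to `S` at `x`. -/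
def proxNormalCone {H : Type*} [NormedAddCommGroup H] [InnerProductSpace ℝ H]
    (S : Set H) (x : H) : Set H :=
  {v | ∃ α : ℝ, 0 < α ∧ x ∈ projSet S (x + α • v)}

/-- The proximal subdifferential of the distance function `d_S` at `x`. -/
def proxSubdiffDist {H : Type*} [NormedAddCommGroup H] [InnerProductSpace ℝ H]
    (S : Set H) (x : H) : Set H :=
  {v | ∃ M : ℝ, 0 < M ∧ ∃ α : ℝ, 0 < α ∧ ∀ y ∈ Metric.ball x α,
    ⟪v, y - x⟫ ≤ Metric.infDist y S - Metric.infDist x S + M * ‖y - x‖ ^ 2}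

section aux

variable {H : Type*} [NormedAddCommGroup H] [InnerProductSpace ℝ H]
  {S : Set H} {x v : H}

/-- proximal normal inequality from projection membership -/
lemma aux_proj_ineq {α : ℝ} (hα : 0 < α) (hproj : x ∈ projSet S (x + α • v)) :
    ∀ z ∈ S, ⟪v, z - x⟫ ≤ (1 / (2 * α)) * ‖z - x‖ ^ 2 := by
  intro z hz
  have h1 : dist (x + α • v) x = infDist (x + α • v) S := hproj.2
  have h2 : infDist (x + α • v) S ≤ dist (x + α • v) z := infDist_le_dist_of_mem hz
  have h3 : dist (x + α • v) x ≤ dist (x + α • v) z := h1 ▸ h2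
  have e1 : dist (x + α • v) x = ‖α • v‖ := by
    rw [dist_eq_norm]; congr 1; abel
  have e2 : dist (x + α • v) z = ‖(x - z) + α • v‖ := by
    rw [dist_eq_norm]; congr 1; abel
  have h4 : ‖α • v‖ ^ 2 ≤ ‖(x - z) + α • v‖ ^ 2 := by
    have := e1 ▸ e2 ▸ h3
    have h0 : (0:ℝ) ≤ ‖α • v‖ := norm_nonneg _
    nlinarith [norm_nonneg ((x - z) + α • v)]
  rw [norm_add_sq_real] at h4
  have e3 : ⟪x - z, α • v⟫ = α * ⟪x - z, v⟫ := real_inner_smul_right _ _ _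
  have e4 : ⟪v, z - x⟫ = - ⟪x - z, v⟫ := by
    rw [real_inner_comm]
    rw [show z - x = -(x - z) by abel, inner_neg_left]
  have h5 : 0 ≤ ‖x - z‖ ^ 2 + 2 * (α * ⟪x - z, v⟫) := by nlinarith [h4, e3]
  have e5 : ‖z - x‖ = ‖x - z‖ := by rw [norm_sub_rev]
  rw [e4, e5]
  have hα' : 0 < 2 * α := by linarith
  rw [div_mul_eq_mul_div, le_div_iff₀ hα']
  nlinarith

/-- projection membership from global quadratic inequality -/
lemma aux_mem_proj (hx : x ∈ S) {σ : ℝ} (hσ : 0 < σ)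
    (h : ∀ z ∈ S, ⟪v, z - x⟫ ≤ σ * ‖z - x‖ ^ 2) :
    x ∈ projSet S (x + (1 / (2 * σ)) • v) := by
  set α := 1 / (2 * σ) with hαdef
  have hα : 0 < α := by positivity
  refine ⟨hx, ?_⟩
  have e1 : dist (x + α • v) x = α * ‖v‖ := by
    rw [dist_eq_norm, show x + α • v - x = α • v by abel, norm_smul,
      Real.norm_of_nonneg hα.le]
  rw [e1]
  refine le_antisymm ?_ (e1 ▸ infDist_le_dist_of_mem hx)
  by_contra hlt
  push_neg at hlt
  obtain ⟨z, hz, hdz⟩ := (infDist_lt_iff ⟨x, hx⟩).1 hlt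
  -- dist (x+αv) z < α‖v‖, but we show dist ≥ α‖v‖
  have e2 : dist (x + α • v) z = ‖(x - z) + α • v‖ := by
    rw [dist_eq_norm]; congr 1; abel
  have h4 : (α * ‖v‖) ^ 2 ≤ ‖(x - z) + α • v‖ ^ 2 := by
    rw [norm_add_sq_real, real_inner_smul_right]
    have hzx := h z hz
    have e4 : ⟪v, z - x⟫ = - ⟪x - z, v⟫ := by
      rw [real_inner_comm, show z - x = -(x - z) by abel, inner_neg_left]
    have e5 : ‖z - x‖ = ‖x - z‖ := norm_sub_rev _ _
    have h2ασ : 2 * α * σ = 1 := by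
      rw [hαdef]; field_simp
    rw [e4, e5] at hzx
    have : ‖x - z‖ ^ 2 - 2 * α * (σ * ‖x - z‖ ^ 2) ≤ ‖x - z‖ ^ 2 + 2 * (α * ⟪x - z, v⟫) := by
      nlinarith
    rw [norm_smul, Real.norm_of_nonneg hα.le]
    nlinarith
  have h5 : α * ‖v‖ ≤ ‖(x - z) + α • v‖ := by
    have h6 : (0:ℝ) ≤ α * ‖v‖ := by positivity
    nlinarith [norm_nonneg ((x - z) + α • v)]
  rw [e2] at hdz
  linarith

/-- the subdifferential from a global quadratic inequality, given ‖v‖ ≤ 1 -/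
lemma aux_mem_subdiff (hx : x ∈ S) (hv : ‖v‖ ≤ 1) {σ : ℝ} (hσ : 0 < σ)
    (h : ∀ z ∈ S, ⟪v, z - x⟫ ≤ σ * ‖z - x‖ ^ 2) :
    v ∈ proxSubdiffDist S x := by
  refine ⟨4 * σ, by positivity, 1, one_pos, ?_⟩
  intro y hy
  rw [infDist_zero_of_mem hx]
  have hne : S.Nonempty := ⟨x, hx⟩
  have hdy : infDist y S ≤ ‖y - x‖ := by
    simpa [dist_eq_norm] using infDist_le_dist_of_mem (x := y) hx
  have hdy0 : 0 ≤ infDist y S := infDist_nonneg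
  have hyx : ‖y - x‖ < 1 := by simpa [dist_eq_norm] using hy
  -- it suffices to show the bound up to (1+6σ)ε for all ε ∈ (0,1]
  have key : ∀ ε : ℝ, 0 < ε → ε ≤ 1 →
      ⟪v, y - x⟫ ≤ infDist y S - 0 + 4 * σ * ‖y - x‖ ^ 2 + (1 + 6 * σ) * ε := by
    intro ε hε hε1
    obtain ⟨z, hz, hdz⟩ := (infDist_lt_iff hne).1
      (show infDist y S < infDist y S + ε by linarith)
    have split : ⟪v, y - x⟫ = ⟪v, y - z⟫ + ⟪v, z - x⟫ := by
      rw [← inner_add_right]; congr 1; abel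
    have h1 : ⟪v, y - z⟫ ≤ ‖y - z‖ := by
      calc ⟪v, y - z⟫ ≤ ‖v‖ * ‖y - z‖ := real_inner_le_norm _ _
        _ ≤ 1 * ‖y - z‖ := by
            exact mul_le_mul_of_nonneg_right hv (norm_nonneg _)
        _ = ‖y - z‖ := one_mul _
    have h2 : ⟪v, z - x⟫ ≤ σ * ‖z - x‖ ^ 2 := h z hz
    have hyz : ‖y - z‖ < infDist y S + ε := by
      simpa [dist_eq_norm] using hdz
    have hyz0 : 0 ≤ ‖y - z‖ := norm_nonneg _
    have htri : ‖z - x‖ ≤ ‖y - z‖ + ‖y - x‖ := by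
      calc ‖z - x‖ = ‖(y - x) - (y - z)‖ := by congr 1; abel
        _ ≤ ‖y - x‖ + ‖y - z‖ := norm_sub_le _ _
        _ = ‖y - z‖ + ‖y - x‖ := by ring
    have hzx0 : 0 ≤ ‖z - x‖ := norm_nonneg _
    -- ‖y-z‖ < infDist y S + ε ≤ ‖y-x‖ + ε < 2
    have hsq : ‖y - z‖ ^ 2 ≤ ‖y - x‖ ^ 2 + 3 * ε := by
      nlinarith
    have hzxsq : ‖z - x‖ ^ 2 ≤ 2 * (‖y - x‖ ^ 2 + 3 * ε) + 2 * ‖y - x‖ ^ 2 := by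
      nlinarith [sq_nonneg (‖y - z‖ - ‖y - x‖)]
    nlinarith [h2, hzxsq]
  -- now remove ε
  have final : ∀ ε : ℝ, 0 < ε →
      ⟪v, y - x⟫ ≤ infDist y S - 0 + 4 * σ * ‖y - x‖ ^ 2 + ε := by
    intro ε hε
    have hC : (0:ℝ) < 1 + 6 * σ := by positivity
    set ε' := min (ε / (1 + 6 * σ)) 1 with hε'def
    have hε'pos : 0 < ε' := lt_min (by positivity) one_pos
    have := key ε' hε'pos (min_le_right _ _)
    have hle : (1 + 6 * σ) * ε' ≤ ε := by
      have : ε' ≤ ε / (1 + 6 * σ) := min_le_left _ _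
      calc (1 + 6 * σ) * ε' ≤ (1 + 6 * σ) * (ε / (1 + 6 * σ)) :=
            mul_le_mul_of_nonneg_left this hC.le
        _ = ε := by field_simp
    linarith
  linarith [le_of_forall_pos_le_add final]

/-- norm bound from subdifferential membership -/
lemma aux_norm_le (hx : x ∈ S) (hv : v ∈ proxSubdiffDist S x) : ‖v‖ ≤ 1 := by
  obtain ⟨M, hM, α, hα, h⟩ := hv
  by_contra hgt
  push_neg at hgt
  have hv0 : 0 < ‖v‖ := by linarith
  set t := min (α / (2 * ‖v‖)) ((‖v‖ - 1) / (2 * M * ‖v‖)) with htdef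
  have ht : 0 < t := lt_min (by positivity) (by
    apply div_pos (by linarith) (by positivity))
  have hmem : x + t • v ∈ ball x α := by
    rw [mem_ball, dist_eq_norm, show x + t • v - x = t • v by abel, norm_smul,
      Real.norm_of_nonneg ht.le]
    have h1 : t ≤ α / (2 * ‖v‖) := min_le_left _ _
    have h2 := mul_le_mul_of_nonneg_right h1 hv0.le
    have e : α / (2 * ‖v‖) * ‖v‖ = α / 2 := by field_simp
    linarith
  have := h _ hmem
  rw [infDist_zero_of_mem hx] at this
  have e1 : x + t • v - x = t • v := by abel
  rw [e1, real_inner_smul_right, real_inner_self_eq_norm_sq] at this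
  have hd : infDist (x + t • v) S ≤ t * ‖v‖ := by
    have := infDist_le_dist_of_mem (x := x + t • v) hx
    rwa [dist_eq_norm, e1, norm_smul, Real.norm_of_nonneg ht.le] at this
  have hnt : ‖t • v‖ = t * ‖v‖ := by
    rw [norm_smul, Real.norm_of_nonneg ht.le]
  rw [hnt] at this
  -- this : t * ‖v‖^2 ≤ infDist (x+tv) S - 0 + M * (t‖v‖)^2
  have h2 : t ≤ (‖v‖ - 1) / (2 * M * ‖v‖) := min_le_right _ _
  have h3 : t * (2 * M * ‖v‖) ≤ ‖v‖ - 1 :=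
    (le_div_iff₀ (by positivity)).1 h2
  nlinarith [mul_le_mul_of_nonneg_right h3 (mul_nonneg ht.le hv0.le),
    mul_pos (mul_pos ht hv0) (show (0:ℝ) < ‖v‖ - 1 by linarith)]

/-- normal cone membership from subdifferential membership -/
lemma aux_cone_of_subdiff (hx : x ∈ S) (hv : v ∈ proxSubdiffDist S x) :
    v ∈ proxNormalCone S x := by
  have hvle : ‖v‖ ≤ 1 := aux_norm_le hx hv
  obtain ⟨M, hM, α, hα, h⟩ := hv
  set σ := max M (1 / α) with hσdef
  have hσ : 0 < σ := lt_of_lt_of_le hM (le_max_left _ _)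
  have hglob : ∀ z ∈ S, ⟪v, z - x⟫ ≤ σ * ‖z - x‖ ^ 2 := by
    intro z hz
    by_cases hc : dist z x < α
    · have := h z hc
      rw [infDist_zero_of_mem hx, infDist_zero_of_mem hz] at this
      have hMσ : M ≤ σ := le_max_left _ _
      nlinarith [sq_nonneg ‖z - x‖]
    · push_neg at hc
      rw [dist_eq_norm] at hc
      have h1 : ⟪v, z - x⟫ ≤ ‖z - x‖ := by
        calc ⟪v, z - x⟫ ≤ ‖v‖ * ‖z - x‖ := real_inner_le_norm _ _
          _ ≤ 1 * ‖z - x‖ := mul_le_mul_of_nonneg_right hvle (norm_nonneg _)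
          _ = ‖z - x‖ := one_mul _
      have h2 : (1 / α) ≤ σ := le_max_right _ _
      have h3 : ‖z - x‖ ≤ (1 / α) * ‖z - x‖ ^ 2 := by
        rw [one_div, inv_mul_eq_div, le_div_iff₀ hα]
        nlinarith [norm_nonneg (z - x)]
      nlinarith [sq_nonneg ‖z - x‖]
  exact ⟨1 / (2 * σ), by positivity, aux_mem_proj hx hσ hglob⟩

end aux

/-- For a closed set `S` in a Hilbert space and `x ∈ S`, a unit vector is a proximal
normal at `x` iff it lies in the proximal subdifferential of `d_S` at `x`; more generally
`∂^P d_S(x) = N(S,x) ∩ B̄(0,1)`. -/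
theorem proxSubdiffDist_eq_proxNormalCone_inter {H : Type*} [NormedAddCommGroup H]
    [InnerProductSpace ℝ H] [CompleteSpace H] (S : Set H) (hS : IsClosed S) (x : H)
    (hx : x ∈ S) :
    (∀ v : H, ‖v‖ = 1 → (v ∈ proxNormalCone S x ↔ v ∈ proxSubdiffDist S x)) ∧
      proxSubdiffDist S x = proxNormalCone S x ∩ Metric.closedBall 0 1 := by
  have hEq : proxSubdiffDist S x = proxNormalCone S x ∩ Metric.closedBall 0 1 := by
    ext v
    constructor
    · intro hv
      exact ⟨aux_cone_of_subdiff hx hv, mem_closedBall_zero_iff.2 (aux_norm_le hx hv)⟩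
    · rintro ⟨⟨α, hα, hproj⟩, hb⟩
      exact aux_mem_subdiff hx (mem_closedBall_zero_iff.1 hb)
        (show (0:ℝ) < 1 / (2 * α) by positivity) (aux_proj_ineq hα hproj)
  refine ⟨fun v hv1 => ⟨fun hc => ?_, fun hs => ?_⟩, hEq⟩
  · rw [hEq]
    exact ⟨hc, mem_closedBall_zero_iff.2 hv1.le⟩
  · rw [hEq] at hs
    exact hs.1
end

section
/- Fix N ≥ 2 and r > 0. For 1 ≤ i < j ≤ N define D_ij(q) = |q_i - q_j| - 2r for q = (q₁,…,q_N) ∈ ℝ^{2N} (each q_i ∈ ℝ²), and let Q_ij = {q ∈ ℝ^{2N} : D_ij(q) ≥ 0}. Then Q_ij is η₀-prox-regular with η₀ = r√2. -/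
open Metric RealInnerProductSpace

noncomputable section

/-- The configuration space of `N` planar disks: `ℝ^{2N}` with the Euclidean norm. -/
abbrev Conf (N : ℕ) := PiLp 2 (fun _ : Fin N => EuclideanSpace ℝ (Fin 2))

/-- Signed distance between disks `i` and `j` of radius `r`. -/
def Dij {N : ℕ} (r : ℝ) (i j : Fin N) (q : Conf N) : ℝ := ‖q i - q j‖ - 2 * r

/-- The unit vector from `qᵢ` towards `qⱼ`. -/
def eij {N : ℕ} (i j : Fin N) (q : Conf N) : EuclideanSpace ℝ (Fin 2) :=
  ‖q j - q i‖⁻¹ • (q j - q i)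

/-- The gradient `G_{ij}(q) = ∇D_{ij}(q)`, with `-e_{ij}(q)` in slot `i`, `e_{ij}(q)` in
slot `j`, and zeros elsewhere. -/
def Gij {N : ℕ} (i j : Fin N) (q : Conf N) : Conf N :=
  WithLp.toLp 2 (fun k => if k = i then -eij i j q else if k = j then eij i j q else 0)

/-- `S` is `η`-prox-regular: around every boundary point, every unit proximal normal
direction admits an external tangent ball of radius `η`. -/
def IsProxRegular {H : Type*} [NormedAddCommGroup H] [InnerProductSpace ℝ H]
    (S : Set H) (η : ℝ) : Prop :=
  ∀ x ∈ frontier S, ∀ v ∈ proxNormalCone S x, ‖v‖ = 1 →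
    Metric.ball (x + η • v) η ∩ S = ∅

private lemma conf_pair_le {N : ℕ} {i j : Fin N} (hij : i ≠ j) (d : Conf N) :
    ‖d i‖ ^ 2 + ‖d j‖ ^ 2 ≤ ‖d‖ ^ 2 := by
  have h := Finset.sum_le_sum_of_subset_of_nonneg (f := fun k => ‖d k‖ ^ 2)
    (Finset.subset_univ ({i, j} : Finset (Fin N))) (fun k _ _ => by positivity)
  rw [Finset.sum_pair hij] at h
  calc ‖d i‖ ^ 2 + ‖d j‖ ^ 2 ≤ ∑ k, ‖d k‖ ^ 2 := h
    _ = ‖d‖ ^ 2 := (PiLp.norm_sq_eq_of_L2 _ d).symm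

private lemma sub_sq_le_two {F : Type*} [NormedAddCommGroup F] [InnerProductSpace ℝ F]
    (a b : F) : ‖a - b‖ ^ 2 ≤ 2 * (‖a‖ ^ 2 + ‖b‖ ^ 2) := by
  have h := parallelogram_law_with_norm ℝ a b
  nlinarith [sq_nonneg ‖a + b‖, norm_nonneg (a + b)]

private lemma key_lower {N : ℕ} {r : ℝ} (hr : 0 < r) {i j : Fin N} (hij : i ≠ j)
    {x y : Conf N} (hu : ‖x i - x j‖ = 2 * r) (hy : 2 * r ≤ ‖y i - y j‖) :
    4 * r ^ 2 - ⟪x i - x j, y i - y j⟫ ≤ ‖y - x‖ ^ 2 := by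
  have h1 := conf_pair_le hij (y - x)
  have h5 : (y - x) i = y i - x i := rfl
  have h6 : (y - x) j = y j - x j := rfl
  rw [h5, h6] at h1
  have h2 := sub_sq_le_two (y i - x i) (y j - x j)
  have h3 : (y i - x i) - (y j - x j) = (y i - y j) - (x i - x j) := by abel
  rw [h3] at h2
  have h4 := norm_sub_sq_real (y i - y j) (x i - x j)
  have h7 : ⟪y i - y j, x i - x j⟫ = ⟪x i - x j, y i - y j⟫ := real_inner_comm _ _
  have h8 : (2 * r) ^ 2 ≤ ‖y i - y j‖ ^ 2 := by nlinarith
  nlinarith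

set_option maxHeartbeats 1000000 in
/-- The set `Q_{ij} = {q : D_{ij}(q) ≥ 0}` is `η₀`-prox-regular with `η₀ = r√2`. -/
theorem isProxRegular_Qij (N : ℕ) (r : ℝ) (hr : 0 < r) (i j : Fin N) (hij : i ≠ j) :
    IsProxRegular {q : Conf N | 0 ≤ Dij r i j q} (r * Real.sqrt 2) := by
  classical
  have hs2 : (0:ℝ) < Real.sqrt 2 := by positivity
  have hs2sq : Real.sqrt 2 ^ 2 = 2 := Real.sq_sqrt (by norm_num)
  intro x _ v hv hv1
  set η : ℝ := r * Real.sqrt 2 with hηdef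
  have hη0 : 0 < η := by positivity
  obtain ⟨α, hα, hxS, hdist⟩ := hv
  set S : Set (Conf N) := {q : Conf N | 0 ≤ Dij r i j q} with hSdef
  set p : Conf N := x + α • v with hpdef
  have hxij : 2 * r ≤ ‖x i - x j‖ := by
    have h : (0:ℝ) ≤ ‖x i - x j‖ - 2 * r := hxS
    linarith
  set u := x i - x j with hu
  set w := p i - p j with hw
  set dp := ‖w‖ with hdp
  have hdp0 : 0 ≤ dp := norm_nonneg _
  have hdpx : dist p x = α := by
    rw [hpdef, dist_eq_norm, add_sub_cancel_left, norm_smul, hv1,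
      Real.norm_eq_abs, abs_of_pos hα, mul_one]
  have hdplt : dp < 2 * r := by
    by_contra h
    push_neg at h
    have hpS : p ∈ S := by
      show (0:ℝ) ≤ ‖p i - p j‖ - 2 * r
      rw [← hw, ← hdp]; linarith
    have h0 : Metric.infDist p S ≤ 0 := by
      simpa using Metric.infDist_le_dist_of_mem (x := p) hpS
    rw [← hdist, hdpx] at h0
    linarith
  -- unit direction of w
  obtain ⟨e, he1, hwe⟩ : ∃ e : EuclideanSpace ℝ (Fin 2), ‖e‖ = 1 ∧ w = dp • e := by
    rcases eq_or_ne w 0 with h | h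
    · exact ⟨EuclideanSpace.single 0 1, by simp, by simp [h, hdp]⟩
    · have hdne : dp ≠ 0 := by rw [hdp]; exact norm_ne_zero_iff.mpr h
      refine ⟨dp⁻¹ • w, ?_, ?_⟩
      · rw [norm_smul, Real.norm_eq_abs, abs_inv, abs_of_nonneg hdp0, ← hdp,
          inv_mul_cancel₀ hdne]
      · rw [smul_smul, mul_inv_cancel₀ hdne, one_smul]
  set c0 : ℝ := (2 * r - dp) / 2 with hc0def
  have hc0 : 0 < c0 := by rw [hc0def]; linarith
  -- the explicit nearest point qs
  set qs : Conf N := WithLp.toLp 2 (fun k => if k = i then p i + c0 • e else if k = j then p j - c0 • e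
    else p k) with hqs
  have hqsi : qs i = p i + c0 • e := by simp [hqs]
  have hqsj : qs j = p j - c0 • e := by simp [hqs, (Ne.symm hij)]
  have hqsk : ∀ k, k ≠ i → k ≠ j → qs k = p k := by intro k h1 h2; simp [hqs, h1, h2]
  have hqsij : qs i - qs j = (2 * r) • e := by
    rw [hqsi, hqsj]
    have h1 : p i + c0 • e - (p j - c0 • e) = (p i - p j) + (c0 + c0) • e := by
      rw [add_smul]; abel
    rw [h1, ← hw, hwe, ← add_smul]
    congr 1
    rw [hc0def]; ring
  have hqsS : qs ∈ S := by
    show (0:ℝ) ≤ ‖qs i - qs j‖ - 2 * r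
    rw [hqsij, norm_smul, he1, Real.norm_eq_abs, mul_one, abs_of_nonneg (by linarith)]
    linarith
  have hsub : ∀ k, p k - qs k = if k = i then -(c0 • e) else if k = j then c0 • e else 0 := by
    intro k
    by_cases h1 : k = i
    · subst h1; rw [hqsi]; simp
    · by_cases h2 : k = j
      · subst h2; rw [hqsj, if_neg h1]; simp
      · rw [hqsk k h1 h2, if_neg h1, if_neg h2, sub_self]
  have hdistqs : dist p qs = c0 * Real.sqrt 2 := by
    have hsq : dist p qs ^ 2 = (c0 * Real.sqrt 2) ^ 2 := by
      rw [dist_eq_norm, PiLp.norm_sq_eq_of_L2]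
      have hzero : ∀ k ∈ Finset.univ, k ∉ ({i, j} : Finset (Fin N)) →
          ‖(p - qs) k‖ ^ 2 = 0 := by
        intro k _ hk
        simp only [Finset.mem_insert, Finset.mem_singleton, not_or] at hk
        rw [PiLp.sub_apply, hsub k, if_neg hk.1, if_neg hk.2]
        simp
      rw [← Finset.sum_subset (Finset.subset_univ ({i, j} : Finset (Fin N))) hzero,
        Finset.sum_pair hij, PiLp.sub_apply, PiLp.sub_apply, hsub i, hsub j,
        if_pos rfl, if_neg (Ne.symm hij), if_pos rfl, norm_neg, norm_smul, he1,
        Real.norm_eq_abs, mul_one, sq_abs, mul_pow, hs2sq]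
      ring
    have h1 : 0 ≤ dist p qs := dist_nonneg
    have h2 : 0 ≤ c0 * Real.sqrt 2 := by positivity
    calc dist p qs = Real.sqrt (dist p qs ^ 2) := (Real.sqrt_sq h1).symm
      _ = Real.sqrt ((c0 * Real.sqrt 2) ^ 2) := by rw [hsq]
      _ = c0 * Real.sqrt 2 := Real.sqrt_sq h2
  have hup : α ≤ c0 * Real.sqrt 2 := by
    calc α = Metric.infDist p S := by rw [← hdist, hdpx]
      _ ≤ dist p qs := Metric.infDist_le_dist_of_mem hqsS
      _ = c0 * Real.sqrt 2 := hdistqs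
  -- lower chain at q = x
  set a := p i - x i with ha0
  set b := p j - x j with hb0
  have hA : α ^ 2 = ‖p - x‖ ^ 2 := by rw [← hdpx, dist_eq_norm]
  have hai' : (p - x) i = a := by rw [ha0]; rfl
  have hbj' : (p - x) j = b := by rw [hb0]; rfl
  clear_value a b
  have hB : ‖a‖ ^ 2 + ‖b‖ ^ 2 ≤ ‖p - x‖ ^ 2 := by
    have := conf_pair_le hij (p - x)
    rwa [hai', hbj'] at this
  have hpar := parallelogram_law_with_norm ℝ a b
  have hwu : a - b = w - u := by rw [ha0, hb0, hw, hu]; abel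
  have hDle : (2 * r - dp) ^ 2 ≤ ‖w - u‖ ^ 2 := by
    have h1 : ‖u‖ - ‖w‖ ≤ ‖u - w‖ := norm_sub_norm_le u w
    have h2 : ‖u - w‖ = ‖w - u‖ := norm_sub_rev u w
    have h3 : 2 * r - dp ≤ ‖w - u‖ := by rw [hdp]; linarith only [h1, h2, hxij]
    have h4 : (0:ℝ) ≤ 2 * r - dp := by linarith only [hdplt]
    nlinarith only [h3, h4, norm_nonneg (w - u)]
  have hαup2 : α ^ 2 ≤ (2 * r - dp) ^ 2 / 2 := by
    have h1 : α ^ 2 ≤ (c0 * Real.sqrt 2) ^ 2 := by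
      nlinarith only [hα.le, hup, mul_nonneg hc0.le hs2.le]
    rw [mul_pow, hs2sq, hc0def] at h1
    linarith only [h1]
  have hC2 : ‖w - u‖ ^ 2 ≤ 2 * (‖a‖ ^ 2 + ‖b‖ ^ 2) := by
    have := sub_sq_le_two a b
    rwa [hwu] at this
  -- all inequalities are equalities
  have hEsum : ‖p - x‖ ^ 2 = ‖a‖ ^ 2 + ‖b‖ ^ 2 := by
    linarith only [hA, hB, hC2, hDle, hαup2]
  have hCeq2 : ‖w - u‖ ^ 2 = 2 * (‖a‖ ^ 2 + ‖b‖ ^ 2) := by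
    linarith only [hC2, hB, hA, hαup2, hDle]
  have hpar2 : ‖a + b‖ ^ 2 + ‖w - u‖ ^ 2 = 2 * (‖a‖ ^ 2 + ‖b‖ ^ 2) := by
    have h := parallelogram_law_with_norm ℝ a b
    rw [hwu] at h
    linear_combination h
  have hEab : ‖a + b‖ ^ 2 = 0 := by linarith only [hpar2, hCeq2]
  have hCeq : ‖w - u‖ ^ 2 = (2 * r - dp) ^ 2 := by
    linarith only [hCeq2, hB, hA, hαup2, hDle]
  have hab : b = -a := by
    have h0 : a + b = 0 :=
      norm_eq_zero.mp ((pow_eq_zero_iff (two_ne_zero)).mp hEab)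
    exact eq_neg_of_add_eq_zero_left (by rwa [add_comm] at h0)
  -- characterize w and a
  have hexp := norm_sub_sq_real w u
  have hcs : ⟪w, u⟫ ≤ ‖w‖ * ‖u‖ := real_inner_le_norm w u
  rw [← hdp] at hexp hcs
  have hnu : ‖u‖ = 2 * r := by
    have hle : ‖u‖ ≤ 2 * r := by
      nlinarith only [hCeq, hexp, hcs, hxij, hdplt, hdp0]
    exact le_antisymm hle hxij
  have hinner_eq : ⟪w, u⟫ = ‖w‖ * ‖u‖ := by
    rw [← hdp, hnu]
    have hnusq : ‖u‖ ^ 2 = (2 * r) ^ 2 := by rw [hnu]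
    linarith only [hexp, hCeq, hnusq]
  have hw2 : ‖u‖ • w = ‖w‖ • u := inner_eq_norm_mul_iff_real.mp hinner_eq
  rw [hnu, ← hdp] at hw2
  have haa : a + a = w - u := by rw [← hwu, hab]; abel
  have h4ra : (4 * r) • a = (dp - 2 * r) • u := by
    have h1 : (2 * r) • (a + a) = (2 * r) • (w - u) := by rw [haa]
    rw [smul_add, smul_sub, hw2] at h1
    rw [show (4 : ℝ) * r = 2 * r + 2 * r by ring, add_smul, sub_smul]
    exact h1
  have hr4 : (4 * r) ≠ 0 := by positivity
  have haeq : a = ((dp - 2 * r) / (4 * r)) • u := by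
    calc a = (4 * r)⁻¹ • ((4 * r) • a) := by
          rw [smul_smul, inv_mul_cancel₀ hr4, one_smul]
      _ = (4 * r)⁻¹ • ((dp - 2 * r) • u) := by rw [h4ra]
      _ = ((dp - 2 * r) / (4 * r)) • u := by rw [smul_smul, ← div_eq_inv_mul]
  -- p agrees with x away from i, j
  have hpk : ∀ k, k ≠ i → k ≠ j → p k = x k := by
    intro k h1 h2
    have hnorm : ‖p - x‖ ^ 2 = ∑ k, ‖(p - x) k‖ ^ 2 := PiLp.norm_sq_eq_of_L2 _ _
    have hsd : ∑ k ∈ Finset.univ \ ({i, j} : Finset (Fin N)), ‖(p - x) k‖ ^ 2 = 0 := by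
      have hs := Finset.sum_sdiff (f := fun k => ‖(p - x) k‖ ^ 2)
        (Finset.subset_univ ({i, j} : Finset (Fin N)))
      rw [Finset.sum_pair hij, hai', hbj'] at hs
      linarith only [hs, hEsum, hnorm]
    have hk0 := (Finset.sum_eq_zero_iff_of_nonneg (fun k _ => by positivity)).mp hsd k
      (by simp [h1, h2])
    have h3 : (p - x) k = 0 := norm_eq_zero.mp ((pow_eq_zero_iff (two_ne_zero)).mp hk0)
    have h4 : p k - x k = 0 := h3
    exact sub_eq_zero.mp h4
  -- the exact value of α
  have hαeq : α = c0 * Real.sqrt 2 := by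
    have hlow : (2 * r - dp) ^ 2 / 2 ≤ α ^ 2 := by
      linarith only [hA, hB, hCeq2, hDle]
    have h2 : (c0 * Real.sqrt 2) ^ 2 = (2 * r - dp) ^ 2 / 2 := by
      rw [mul_pow, hs2sq, hc0def]; ring
    refine le_antisymm hup ?_
    nlinarith only [hlow, h2, hα.le, mul_nonneg hc0.le hs2.le, mul_pos hc0 hs2]
  -- now the conclusion
  rw [Set.eq_empty_iff_forall_notMem]
  rintro y ⟨hyb, hyS⟩
  have hyij : 2 * r ≤ ‖y i - y j‖ := by
    have h : (0:ℝ) ≤ ‖y i - y j‖ - 2 * r := hyS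
    linarith
  have hnu' : ‖x i - x j‖ = 2 * r := hnu
  have hkey := key_lower hr hij (x := x) (y := y) hnu' hyij
  set z := y i - y j with hz
  have hinner1 : ⟪p - x, y - x⟫ = ⟪a, (y i - x i) - (y j - x j)⟫ := by
    rw [PiLp.inner_apply]
    have hzero : ∀ k ∈ Finset.univ, k ∉ ({i, j} : Finset (Fin N)) →
        ⟪(p - x) k, (y - x) k⟫ = 0 := by
      intro k _ hk
      simp only [Finset.mem_insert, Finset.mem_singleton, not_or] at hk
      have h3 : (p - x) k = 0 := by
        show p k - x k = 0
        rw [hpk k hk.1 hk.2, sub_self]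
      rw [h3, inner_zero_left]
    rw [← Finset.sum_subset (Finset.subset_univ ({i, j} : Finset (Fin N))) hzero,
      Finset.sum_pair hij]
    have haj : (p - x) j = -a := by rw [← hab]; exact hbj'
    have hyi : (y - x) i = y i - x i := rfl
    have hyj : (y - x) j = y j - x j := rfl
    rw [hai', haj, hyi, hyj]
    simp only [inner_neg_left, inner_sub_right]
    ring
  have hinner2 : ⟪p - x, y - x⟫ = ((2 * r - dp) / (4 * r)) * (4 * r ^ 2 - ⟪u, z⟫) := by
    rw [hinner1, haeq]
    have h1 : (y i - x i) - (y j - x j) = z - u := by rw [hz, hu]; abel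
    rw [h1, real_inner_smul_left, inner_sub_right, real_inner_self_eq_norm_sq, hnu]
    ring
  have hlampos : 0 < (2 * r - dp) / (4 * r) := div_pos (by linarith) (by linarith)
  have hpxv : p - x = α • v := by rw [hpdef]; exact add_sub_cancel_left x (α • v)
  have hinner3 : ⟪p - x, y - x⟫ = α * ⟪v, y - x⟫ := by
    rw [hpxv, real_inner_smul_left]
  have halam : α = ((2 * r - dp) / (4 * r)) * (2 * η) := by
    rw [hαeq, hηdef, hc0def]
    field_simp
    ring
  have hmain : 2 * η * ⟪v, y - x⟫ ≤ ‖y - x‖ ^ 2 := by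
    have h1 : ((2 * r - dp) / (4 * r)) * (2 * η * ⟪v, y - x⟫)
        = ((2 * r - dp) / (4 * r)) * (4 * r ^ 2 - ⟪u, z⟫) := by
      rw [← hinner2, hinner3, halam]; ring
    have h2 : 2 * η * ⟪v, y - x⟫ = 4 * r ^ 2 - ⟪u, z⟫ :=
      mul_left_cancel₀ (ne_of_gt hlampos) h1
    rw [h2]
    rw [← hu] at hkey
    exact hkey
  have h1 : ‖y - (x + η • v)‖ < η := by
    rw [← dist_eq_norm]; exact mem_ball.mp hyb
  have h2 : y - (x + η • v) = (y - x) - η • v := by abel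
  have h3 := norm_sub_sq_real (y - x) (η • v)
  have h5 : ⟪y - x, η • v⟫ = η * ⟪v, y - x⟫ := by
    rw [real_inner_smul_right, real_inner_comm]
  have h6 : ‖η • v‖ ^ 2 = η ^ 2 := by
    rw [norm_smul, hv1, mul_one, Real.norm_eq_abs, sq_abs]
  have h4 : ‖(y - x) - η • v‖ ^ 2 < η ^ 2 := by
    rw [← h2]; nlinarith only [h1, norm_nonneg (y - (x + η • v)), hη0]
  rw [h5, h6] at h3
  linarith only [h3, h4, hmain]
end
end

section
/- Let Q = {q ∈ ℝ^{2N} : D_ij(q) ≥ 0 for all i < j} be the set of feasible hard-disk configurations and q ∈ Q. Then the proximal normal cone N(Q, q) equals the cone N_q = { -Σ λ_ij G_ij(q) : λ_ij ≥ 0, λ_ij = 0 whenever D_ij(q) > 0 }, which is the polar cone of C_q = { v ∈ ℝ^{2N} : G_ij(q)·v ≥ 0 for all i<j with D_ij(q) = 0 }. -/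
set_option maxHeartbeats 1000000

open Metric RealInnerProductSpace

noncomputable section

/-- The set of feasible configurations. -/
def Qfeas (N : ℕ) (r : ℝ) : Set (Conf N) :=
  {q | ∀ i j : Fin N, i < j → 0 ≤ Dij r i j q}

/-- The cone `N_q` of nonnegative combinations `-Σ λ_{ij} G_{ij}(q)` supported on
contact pairs. -/
def coneNq (N : ℕ) (r : ℝ) (q : Conf N) : Set (Conf N) :=
  {w | ∃ lam : Fin N × Fin N → ℝ, (∀ p, 0 ≤ lam p) ∧
    (∀ p : Fin N × Fin N, p.1 < p.2 → 0 < Dij r p.1 p.2 q → lam p = 0) ∧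
    w = -∑ p ∈ Finset.univ.filter (fun p : Fin N × Fin N => p.1 < p.2),
          lam p • Gij p.1 p.2 q}

/-- The cone of feasible velocities. -/
def coneCq (N : ℕ) (r : ℝ) (q : Conf N) : Set (Conf N) :=
  {v | ∀ i j : Fin N, i < j → Dij r i j q = 0 → 0 ≤ ⟪Gij i j q, v⟫}

/- ### Auxiliary lemmas -/

lemma cone_caratheodory {E : Type*} [AddCommGroup E] [Module ℝ E] {ι : Type*} [DecidableEq ι]
    (g : ι → E) (A : Finset ι) :
    ∀ c : ι → ℝ, (∀ i ∈ A, 0 ≤ c i) →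
    ∃ B : Finset ι, B ⊆ A ∧ LinearIndependent ℝ (fun b : B => g b) ∧
      ∃ d : ι → ℝ, (∀ i ∈ B, 0 ≤ d i) ∧ ∑ i ∈ B, d i • g i = ∑ i ∈ A, c i • g i := by
  classical
  induction A using Finset.strongInductionOn with
  | _ A ih =>
  intro c hc
  by_cases hli : LinearIndependent ℝ (fun b : A => g b)
  · exact ⟨A, Finset.Subset.refl A, hli, c, hc, rfl⟩
  · rw [Fintype.linearIndependent_iff] at hli
    push_neg at hli
    obtain ⟨m, hm0, b₀, hb₀⟩ := hli
    set μ : ι → ℝ := fun i => if h : i ∈ A then m ⟨i, h⟩ else 0 with hμ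
    have hμsum : ∑ i ∈ A, μ i • g i = 0 := by
      rw [← Finset.sum_coe_sort A (fun i => μ i • g i)]
      rw [← hm0]
      refine Finset.sum_congr rfl fun b _ => ?_
      simp [hμ, b.2]
    have hμb₀ : μ (b₀ : ι) ≠ 0 := by simpa [hμ, b₀.2] using hb₀
    obtain ⟨ν, hνsum, i₁, hi₁A, hi₁pos⟩ :
        ∃ ν : ι → ℝ, (∑ i ∈ A, ν i • g i = 0) ∧ ∃ i ∈ A, 0 < ν i := by
      rcases hμb₀.lt_or_gt with h | h
      · refine ⟨-μ, ?_, b₀, b₀.2, by simpa using h⟩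
        simp only [Pi.neg_apply, neg_smul, Finset.sum_neg_distrib, hμsum, neg_zero]
      · exact ⟨μ, hμsum, b₀, b₀.2, h⟩
    set T := A.filter (fun i => 0 < ν i) with hT
    obtain ⟨i₀, hi₀T, hi₀min⟩ := T.exists_min_image (fun i => c i / ν i)
      ⟨i₁, Finset.mem_filter.2 ⟨hi₁A, hi₁pos⟩⟩
    have hi₀A : i₀ ∈ A := (Finset.mem_filter.1 hi₀T).1
    have hνi₀ : 0 < ν i₀ := (Finset.mem_filter.1 hi₀T).2
    set t := c i₀ / ν i₀ with htdef
    have ht : 0 ≤ t := div_nonneg (hc i₀ hi₀A) hνi₀.le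
    set c' : ι → ℝ := fun i => c i - t * ν i with hc'def
    have hc' : ∀ i ∈ A, 0 ≤ c' i := by
      intro i hiA
      by_cases hνi : 0 < ν i
      · have h1 := hi₀min i (Finset.mem_filter.2 ⟨hiA, hνi⟩)
        have h2 : t * ν i ≤ c i := (le_div_iff₀ hνi).1 h1
        simp only [hc'def]; linarith
      · have : t * ν i ≤ 0 := mul_nonpos_of_nonneg_of_nonpos ht (not_lt.1 hνi)
        simp only [hc'def]
        linarith [hc i hiA]
    have hzero : c' i₀ = 0 := by
      simp only [hc'def, htdef]
      field_simp
      ring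
    have hsumA : ∑ i ∈ A, c' i • g i = ∑ i ∈ A, c i • g i := by
      simp only [hc'def, sub_smul, Finset.sum_sub_distrib, mul_smul]
      rw [← Finset.smul_sum, hνsum, smul_zero, sub_zero]
    have hsum : ∑ i ∈ A.erase i₀, c' i • g i = ∑ i ∈ A, c i • g i := by
      rw [Finset.sum_erase_eq_sub hi₀A, hzero, zero_smul, sub_zero, hsumA]
    obtain ⟨B, hBsub, hBli, d, hd, hdsum⟩ :=
      ih (A.erase i₀) (Finset.erase_ssubset hi₀A) c'
        (fun i hi => hc' i (Finset.mem_of_mem_erase hi))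
    exact ⟨B, hBsub.trans (Finset.erase_subset _ _), hBli, d, hd, by rw [hdsum, hsum]⟩

lemma isClosed_coneGen_indep {H : Type*} [NormedAddCommGroup H] [InnerProductSpace ℝ H]
    {ι : Type*} [DecidableEq ι]
    (g : ι → H) (B : Finset ι) (hB : LinearIndependent ℝ (fun b : B => g b)) :
    IsClosed {w : H | ∃ c : ι → ℝ, (∀ i ∈ B, 0 ≤ c i) ∧ w = ∑ i ∈ B, c i • g i} := by
  classical
  let L : (B → ℝ) →ₗ[ℝ] H :=
    { toFun := fun c => ∑ b : B, c b • g (b : ι)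
      map_add' := by intro x y; simp [add_smul, Finset.sum_add_distrib]
      map_smul' := by intro r x; simp [smul_smul, Finset.smul_sum] }
  have hker : LinearMap.ker L = ⊥ := by
    rw [LinearMap.ker_eq_bot']
    intro c hc
    exact funext (Fintype.linearIndependent_iff.1 hB c hc)
  have hemb : Topology.IsClosedEmbedding L := LinearMap.isClosedEmbedding_of_injective hker
  have hcl : IsClosed {c : B → ℝ | ∀ b : B, 0 ≤ c b} := by
    have : {c : B → ℝ | ∀ b : B, 0 ≤ c b} = ⋂ b : B, {c : B → ℝ | 0 ≤ c b} := by
      ext c; simp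
    rw [this]
    exact isClosed_iInter fun b => isClosed_le continuous_const (continuous_apply b)
  have himg := hemb.isClosedMap _ hcl
  convert himg using 1
  ext w
  constructor
  · rintro ⟨c, hc, rfl⟩
    refine ⟨fun b : B => c (b : ι), fun b => hc _ b.2, ?_⟩
    show ∑ b : B, c (b : ι) • g (b : ι) = _
    rw [Finset.sum_coe_sort B (fun i => c i • g i)]
  · rintro ⟨d, hd, rfl⟩
    refine ⟨fun i => if h : i ∈ B then d ⟨i, h⟩ else 0, fun i hi => by simp [hi, hd ⟨i, hi⟩], ?_⟩
    show (∑ b : B, d b • g (b : ι)) = _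
    rw [← Finset.sum_coe_sort B (fun i => (if h : i ∈ B then d ⟨i, h⟩ else 0) • g i)]
    exact Finset.sum_congr rfl fun b _ => by simp [b.2]

lemma isClosed_coneGen {H : Type*} [NormedAddCommGroup H] [InnerProductSpace ℝ H]
    [FiniteDimensional ℝ H] {ι : Type*} [DecidableEq ι] (g : ι → H) (A : Finset ι) :
    IsClosed {w : H | ∃ c : ι → ℝ, (∀ i ∈ A, 0 ≤ c i) ∧ w = ∑ i ∈ A, c i • g i} := by
  classical
  have hset : {w : H | ∃ c : ι → ℝ, (∀ i ∈ A, 0 ≤ c i) ∧ w = ∑ i ∈ A, c i • g i} =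
      ⋃ B ∈ A.powerset, ⋃ (_ : LinearIndependent ℝ (fun b : B => g b)),
        {w : H | ∃ c : ι → ℝ, (∀ i ∈ (B : Finset ι), 0 ≤ c i) ∧
          w = ∑ i ∈ (B : Finset ι), c i • g i} := by
    ext w
    simp only [Set.mem_iUnion, Set.mem_setOf_eq, Finset.mem_powerset]
    constructor
    · rintro ⟨c, hc, rfl⟩
      obtain ⟨B, hBA, hBli, d, hd, hds⟩ := cone_caratheodory g A c hc
      exact ⟨B, hBA, hBli, d, hd, hds.symm⟩
    · rintro ⟨B, hBA, _, c, hc, rfl⟩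
      refine ⟨fun i => if i ∈ B then c i else 0, fun i _ => ?_, ?_⟩
      · by_cases hiB : i ∈ B
        · simpa [hiB] using hc i hiB
        · simp [hiB]
      · rw [← Finset.sum_subset hBA (fun i _ hiB => by simp [hiB])]
        exact (Finset.sum_congr rfl fun i hi => by simp [hi]).symm
  rw [hset]
  apply isClosed_biUnion_finset (s := A.powerset)
  intro B _
  by_cases hB : LinearIndependent ℝ (fun b : B => g b)
  · simpa [hB] using isClosed_coneGen_indep g B hB
  · simp [hB]

lemma farkas_cone {H : Type*} [NormedAddCommGroup H] [InnerProductSpace ℝ H]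
    [FiniteDimensional ℝ H] {ι : Type*} [DecidableEq ι] (g : ι → H) (A : Finset ι) (w : H)
    (hw : ∀ v : H, (∀ i ∈ A, 0 ≤ ⟪g i, v⟫) → 0 ≤ ⟪w, v⟫) :
    ∃ c : ι → ℝ, (∀ i, 0 ≤ c i) ∧ w = ∑ i ∈ A, c i • g i := by
  classical
  let K : ConvexCone ℝ H :=
    { carrier := {x : H | ∃ c : ι → ℝ, (∀ i ∈ A, 0 ≤ c i) ∧ x = ∑ i ∈ A, c i • g i}
      smul_mem' := by
        rintro a ha x ⟨c, hc, rfl⟩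
        exact ⟨fun i => a * c i, fun i hi => mul_nonneg ha.le (hc i hi),
          by rw [Finset.smul_sum]; exact Finset.sum_congr rfl fun i _ => by simp [smul_smul]⟩
      add_mem' := by
        rintro x ⟨c, hc, rfl⟩ y ⟨d, hd, rfl⟩
        refine ⟨fun i => c i + d i, fun i hi => add_nonneg (hc i hi) (hd i hi), ?_⟩
        rw [← Finset.sum_add_distrib]
        exact Finset.sum_congr rfl fun i _ => by simp [add_smul] }
  have hKne : (K : Set H).Nonempty := ⟨0, 0, fun i _ => le_refl 0, by simp⟩
  have hKcl : IsClosed (K : Set H) := isClosed_coneGen g A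
  have hwK : w ∈ K := by
    by_contra hnot
    obtain ⟨y, hy1, hy2⟩ :=
      ProperCone.hyperplane_separation' (⟨K.toPointedCone (ConvexCone.Pointed.of_nonempty_of_isClosed hKne hKcl), hKcl⟩ : ProperCone ℝ H) hnot
    have hgK : ∀ i ∈ A, (g i : H) ∈ K := by
      intro i hi
      refine ⟨fun j => if j = i then 1 else 0, fun j _ => by positivity, ?_⟩
      have : ∀ j ∈ A, (if j = i then (1:ℝ) else 0) • g j = if j = i then g j else 0 := by
        intro j _; split <;> simp
      rw [Finset.sum_congr rfl this, Finset.sum_ite_eq' A i g]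
      simp [hi]
    have h0 : 0 ≤ ⟪w, y⟫ := hw y fun i hi => hy1 _ (hgK i hi)
    rw [real_inner_comm] at h0
    linarith [real_inner_comm w y]
  obtain ⟨c, hc, hcs⟩ := hwK
  exact ⟨fun i => if i ∈ A then c i else 0, fun i => by by_cases h : i ∈ A <;> simp [h, hc i, hc],
    by rw [hcs]; exact (Finset.sum_congr rfl fun i hi => by simp [hi]).symm⟩

lemma inner_Gij {N : ℕ} {i j : Fin N} (hij : i ≠ j) (q v : Conf N) :
    ⟪Gij i j q, v⟫ = ⟪eij i j q, v j - v i⟫ := by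
  rw [PiLp.inner_apply]
  have h : ∀ k : Fin N, ⟪Gij i j q k, v k⟫ =
      (if k = i then ⟪-eij i j q, v i⟫ else 0) + (if k = j then ⟪eij i j q, v j⟫ else 0) := by
    intro k
    simp only [Gij]
    by_cases h1 : k = i
    · subst h1
      simp [hij]
    · by_cases h2 : k = j
      · subst h2
        simp [h1]
      · simp [h1, h2]
  rw [Finset.sum_congr rfl (fun k _ => h k), Finset.sum_add_distrib,
    Finset.sum_ite_eq' Finset.univ i (fun _ => ⟪-eij i j q, v i⟫),
    Finset.sum_ite_eq' Finset.univ j (fun _ => ⟪eij i j q, v j⟫)]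
  simp only [Finset.mem_univ, if_true, inner_neg_left, inner_sub_right]
  ring

lemma norm_pair_sq_le {N : ℕ} (v : Conf N) {i j : Fin N} (hij : i ≠ j) :
    ‖v j - v i‖ ^ 2 ≤ 2 * ‖v‖ ^ 2 := by
  have h1 : ‖v j - v i‖ ^ 2 ≤ 2 * ‖v j‖ ^ 2 + 2 * ‖v i‖ ^ 2 := by
    have h := norm_sub_sq_real (v j) (v i)
    have habs := abs_real_inner_le_norm (v j) (v i)
    have hneg := neg_abs_le (⟪v j, v i⟫)
    nlinarith [sq_nonneg (‖v j‖ - ‖v i‖)]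
  have h2 : ‖v i‖ ^ 2 + ‖v j‖ ^ 2 ≤ ‖v‖ ^ 2 := by
    have hnorm : ‖v‖ ^ 2 = ∑ k, ‖v k‖ ^ 2 := PiLp.norm_sq_eq_of_L2 _ v
    have hsub : ({i, j} : Finset (Fin N)) ⊆ Finset.univ := Finset.subset_univ _
    have hle := Finset.sum_le_sum_of_subset_of_nonneg hsub
      (fun k _ _ => sq_nonneg ‖v k‖)
    rw [Finset.sum_insert (by simp [hij]), Finset.sum_singleton] at hle
    linarith
  linarith

lemma contact_key {E : Type*} [NormedAddCommGroup E] [InnerProductSpace ℝ E]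
    {r : ℝ} (hr : 0 < r) {a b : E} (ha : ‖a‖ = 2 * r) (hb : 2 * r ≤ ‖b‖) :
    ‖a‖ ^ 2 - ⟪a, b⟫ ≤ ‖b - a‖ ^ 2 / 2 := by
  have h := norm_sub_sq_real b a
  have : ⟪b, a⟫ = ⟪a, b⟫ := real_inner_comm a b
  nlinarith [norm_nonneg b, norm_nonneg a]

lemma push_key {E : Type*} [NormedAddCommGroup E] [InnerProductSpace ℝ E]
    {r : ℝ} (hr : 0 < r) {a d : E} (ha : ‖a‖ = 2 * r) (hd : 0 ≤ ⟪a, d⟫) {t : ℝ} (ht : 0 ≤ t) :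
    2 * r ≤ ‖a + t • d‖ := by
  have h1 : ⟪a, a + t • d⟫ = ‖a‖ ^ 2 + t * ⟪a, d⟫ := by
    rw [inner_add_right, real_inner_self_eq_norm_sq, real_inner_smul_right]
  have h2 : ⟪a, a + t • d⟫ ≤ ‖a‖ * ‖a + t • d‖ := real_inner_le_norm _ _
  nlinarith [mul_nonneg ht hd]

/-- For feasible `q`, the proximal normal cone to `Q` at `q` equals `N_q`, which is the
polar cone of the cone of feasible velocities `C_q`. -/
theorem proxNormalCone_Q_eq (N : ℕ) (r : ℝ) (hr : 0 < r) (q : Conf N)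
    (hq : q ∈ Qfeas N r) :
    proxNormalCone (Qfeas N r) q = coneNq N r q ∧
      coneNq N r q = {w | ∀ v ∈ coneCq N r q, ⟪w, v⟫ ≤ 0} := by
  classical
  have hqf : ∀ i j : Fin N, i < j → 0 ≤ Dij r i j q := hq
  have hcontact_norm : ∀ i j : Fin N, i < j → Dij r i j q = 0 → ‖q j - q i‖ = 2 * r := by
    intro i j _ h0
    have h1 : ‖q i - q j‖ = 2 * r := by
      have := h0
      unfold Dij at this
      linarith
    rw [norm_sub_rev] at h1
    exact h1
  -- key estimate for contact pairs:
  have hGlow : ∀ (i j : Fin N), i < j → Dij r i j q = 0 → ∀ y ∈ Qfeas N r,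
      (-⟪Gij i j q, y - q⟫) * (2 * r) ≤ ‖y - q‖ ^ 2 := by
    intro i j hij hD y hy
    have hijne : i ≠ j := ne_of_lt hij
    have ha : ‖q j - q i‖ = 2 * r := hcontact_norm i j hij hD
    have hb : 2 * r ≤ ‖y j - y i‖ := by
      have := hy i j hij
      unfold Dij at this
      rw [norm_sub_rev] at this
      linarith
    have hdiff : (y - q) j - (y - q) i = (y j - y i) - (q j - q i) := by
      simp only [PiLp.sub_apply]
      abel
    have hlin : ⟪Gij i j q, y - q⟫ = ‖q j - q i‖⁻¹ * (⟪q j - q i, y j - y i⟫ - ‖q j - q i‖ ^ 2) := by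
      rw [inner_Gij hijne, hdiff, eij, real_inner_smul_left, inner_sub_right,
        real_inner_self_eq_norm_sq]
    have hane : ‖q j - q i‖ ≠ 0 := by rw [ha]; positivity
    have hkey := contact_key hr ha hb
    have hnp := norm_pair_sq_le (y - q) hijne
    have heq : (-⟪Gij i j q, y - q⟫) * (2 * r) = ‖q j - q i‖ ^ 2 - ⟪q j - q i, y j - y i⟫ := by
      rw [hlin, ← ha]
      field_simp
      ring
    rw [heq]
    calc ‖q j - q i‖ ^ 2 - ⟪q j - q i, y j - y i⟫
        ≤ ‖(y j - y i) - (q j - q i)‖ ^ 2 / 2 := hkey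
      _ = ‖(y - q) j - (y - q) i‖ ^ 2 / 2 := by rw [hdiff]
      _ ≤ ‖y - q‖ ^ 2 := by linarith [norm_pair_sq_le (y - q) hijne]
  -- Part A : coneNq ⊆ polar cone of Cq
  have hA : coneNq N r q ⊆ {w | ∀ v ∈ coneCq N r q, ⟪w, v⟫ ≤ 0} := by
    rintro w ⟨lam, hlam, hlam0, rfl⟩ v hv
    rw [inner_neg_left, neg_nonpos, sum_inner]
    apply Finset.sum_nonneg
    intro p hp
    have hplt : p.1 < p.2 := (Finset.mem_filter.1 hp).2
    rw [real_inner_smul_left]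
    rcases (hqf p.1 p.2 hplt).lt_or_eq with hD | hD
    · rw [hlam0 p hplt hD]; simp
    · exact mul_nonneg (hlam p) (hv p.1 p.2 hplt hD.symm)
  -- Part B : polar cone of Cq ⊆ coneNq  (Farkas)
  have hB : {w | ∀ v ∈ coneCq N r q, ⟪w, v⟫ ≤ 0} ⊆ coneNq N r q := by
    intro w hw
    set A : Finset (Fin N × Fin N) :=
      Finset.univ.filter (fun p : Fin N × Fin N => p.1 < p.2 ∧ Dij r p.1 p.2 q = 0) with hA'
    have hfar : ∀ v : Conf N, (∀ p ∈ A, 0 ≤ ⟪(fun p : Fin N × Fin N => Gij p.1 p.2 q) p, v⟫) →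
        0 ≤ ⟪-w, v⟫ := by
      intro v hv
      have hvC : v ∈ coneCq N r q := by
        intro i j hij hD
        exact hv (i, j) (by simp [hA', hij, hD])
      have := hw v hvC
      rw [inner_neg_left]
      linarith
    obtain ⟨c, hc, hcs⟩ := farkas_cone (fun p : Fin N × Fin N => Gij p.1 p.2 q) A (-w) hfar
    refine ⟨fun p => if p ∈ A then c p else 0,
      fun p => by by_cases h : p ∈ A <;> simp [h, hc], ?_, ?_⟩
    · intro p hplt hDpos
      have hpA : p ∉ A := by
        simp only [hA', Finset.mem_filter, Finset.mem_univ, true_and]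
        rintro ⟨-, h0⟩
        exact hDpos.ne' h0
      simp [hpA]
    · have hsub : A ⊆ Finset.univ.filter (fun p : Fin N × Fin N => p.1 < p.2) := by
        intro p hp
        simp only [Finset.mem_filter, Finset.mem_univ, true_and]
        exact ((Finset.mem_filter.1 hp).2).1
      have heqs : ∑ p ∈ Finset.univ.filter (fun p : Fin N × Fin N => p.1 < p.2),
            (if p ∈ A then c p else 0) • Gij p.1 p.2 q
          = ∑ p ∈ A, c p • Gij p.1 p.2 q := by
        rw [← Finset.sum_subset hsub (fun p _ hp => by simp [hp])]
        exact Finset.sum_congr rfl fun p hp => by simp [hp]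
      rw [heqs, ← hcs]
      exact (neg_neg w).symm
  -- Part C : coneNq ⊆ proxNormalCone
  have hC : coneNq N r q ⊆ proxNormalCone (Qfeas N r) q := by
    rintro w ⟨lam, hlam, hlam0, hwdef⟩
    set F : Finset (Fin N × Fin N) :=
      Finset.univ.filter (fun p : Fin N × Fin N => p.1 < p.2) with hF
    set Λ := ∑ p ∈ F, lam p with hΛ
    have hΛ0 : 0 ≤ Λ := Finset.sum_nonneg fun p _ => hlam p
    set α := r / (Λ + 1) with hαdef
    have hαpos : 0 < α := div_pos hr (by linarith)
    have hαΛ : α * (Λ + 1) = r := div_mul_cancel₀ r (by linarith : Λ + 1 ≠ 0)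
    refine ⟨α, hαpos, hq, ?_⟩
    have hkey : ∀ y ∈ Qfeas N r, 2 * α * ⟪w, y - q⟫ ≤ ‖y - q‖ ^ 2 := by
      intro y hy
      have hip : ⟪w, y - q⟫ = ∑ p ∈ F, -(lam p * ⟪Gij p.1 p.2 q, y - q⟫) := by
        rw [hwdef, inner_neg_left, sum_inner, ← Finset.sum_neg_distrib]
        exact Finset.sum_congr rfl fun p _ => by rw [real_inner_smul_left]
      have hterm : ∀ p ∈ F, -(lam p * ⟪Gij p.1 p.2 q, y - q⟫) * (2 * r) ≤
          lam p * ‖y - q‖ ^ 2 := by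
        intro p hp
        have hplt : p.1 < p.2 := (Finset.mem_filter.1 hp).2
        rcases (hqf p.1 p.2 hplt).lt_or_eq with hD | hD
        · rw [hlam0 p hplt hD]; simp
        · have h1 := hGlow p.1 p.2 hplt hD.symm y hy
          calc -(lam p * ⟪Gij p.1 p.2 q, y - q⟫) * (2 * r)
              = lam p * ((-⟪Gij p.1 p.2 q, y - q⟫) * (2 * r)) := by ring
            _ ≤ lam p * ‖y - q‖ ^ 2 := mul_le_mul_of_nonneg_left h1 (hlam p)
      have hsum : ⟪w, y - q⟫ * (2 * r) ≤ Λ * ‖y - q‖ ^ 2 := by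
        rw [hip, Finset.sum_mul]
        calc ∑ p ∈ F, -(lam p * ⟪Gij p.1 p.2 q, y - q⟫) * (2 * r)
            ≤ ∑ p ∈ F, lam p * ‖y - q‖ ^ 2 := Finset.sum_le_sum hterm
          _ = Λ * ‖y - q‖ ^ 2 := by rw [hΛ, Finset.sum_mul]
      have hS : 0 ≤ ‖y - q‖ ^ 2 := sq_nonneg _
      nlinarith [mul_le_mul_of_nonneg_left hsum hαpos.le, mul_nonneg hαpos.le hS]
    -- projection property
    refine le_antisymm ?_ (infDist_le_dist_of_mem hq)
    by_contra hlt
    push_neg at hlt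
    obtain ⟨y, hyQ, hdy⟩ := (infDist_lt_iff ⟨q, hq⟩).1 hlt
    have hble : dist (q + α • w) q ≤ dist (q + α • w) y := by
      rw [dist_eq_norm, dist_eq_norm]
      have e1 : q + α • w - q = α • w := add_sub_cancel_left q _
      have e2 : q + α • w - y = α • w - (y - q) := by abel
      rw [e1, e2]
      have hexp := norm_sub_sq_real (α • w) (y - q)
      have hin : ⟪α • w, y - q⟫ = α * ⟪w, y - q⟫ := real_inner_smul_left _ _ _
      have hk := hkey y hyQ
      have hsq : ‖α • w‖ ^ 2 ≤ ‖α • w - (y - q)‖ ^ 2 := by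
        rw [hexp, hin]
        linarith
      have := Real.sqrt_le_sqrt hsq
      rwa [Real.sqrt_sq (norm_nonneg _), Real.sqrt_sq (norm_nonneg _)] at this
    linarith
  -- Part D : proxNormalCone ⊆ polar cone of Cq
  have hD : proxNormalCone (Qfeas N r) q ⊆ {w | ∀ v ∈ coneCq N r q, ⟪w, v⟫ ≤ 0} := by
    rintro v ⟨α, hα, hqQ, hdisteq⟩ u hu
    -- feasibility of q + t • u for small t
    have hcontactcase : ∀ (i j : Fin N), i < j → Dij r i j q = 0 → ∀ t : ℝ, 0 ≤ t →
        0 ≤ Dij r i j (q + t • u) := by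
      intro i j hij hD0 t ht
      have happly : (q + t • u) i - (q + t • u) j = -((q j - q i) + t • (u j - u i)) := by
        simp only [PiLp.add_apply, PiLp.smul_apply, smul_sub]
        abel
      rw [Dij, happly, norm_neg]
      have ha : ‖q j - q i‖ = 2 * r := hcontact_norm i j hij hD0
      have hd : 0 ≤ ⟪q j - q i, u j - u i⟫ := by
        have h0 := hu i j hij hD0
        rw [inner_Gij (ne_of_lt hij), eij, real_inner_smul_left] at h0
        have hpos : (0:ℝ) < ‖q j - q i‖⁻¹ := by rw [ha]; positivity
        nlinarith
      have := push_key hr ha hd ht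
      linarith
    have hnoncontactcase : ∀ (i j : Fin N), i < j → 0 < Dij r i j q → ∀ t : ℝ, 0 ≤ t →
        t * (‖u i - u j‖ + 1) ≤ Dij r i j q → 0 ≤ Dij r i j (q + t • u) := by
      intro i j hij hD0 t ht hbound
      have happly : (q + t • u) i - (q + t • u) j = (q i - q j) + t • (u i - u j) := by
        simp only [PiLp.add_apply, PiLp.smul_apply, smul_sub]
        abel
      rw [Dij, happly]
      have h1 : ‖q i - q j‖ ≤ ‖(q i - q j) + t • (u i - u j)‖ + ‖t • (u i - u j)‖ := by
        calc ‖q i - q j‖ = ‖((q i - q j) + t • (u i - u j)) - t • (u i - u j)‖ := by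
              congr 1; abel
          _ ≤ _ := norm_sub_le _ _
      have hnt : ‖t • (u i - u j)‖ = t * ‖u i - u j‖ := by
        rw [norm_smul, Real.norm_of_nonneg ht]
      have h2 : t * ‖u i - u j‖ ≤ Dij r i j q := by
        nlinarith [norm_nonneg (u i - u j)]
      unfold Dij at h2
      rw [hnt] at h1
      linarith
    set P : Finset (Fin N × Fin N) :=
      Finset.univ.filter (fun p : Fin N × Fin N => p.1 < p.2 ∧ 0 < Dij r p.1 p.2 q) with hP
    obtain ⟨δ, hδpos, hδ⟩ : ∃ δ : ℝ, 0 < δ ∧ ∀ t : ℝ, 0 ≤ t → t ≤ δ →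
        q + t • u ∈ Qfeas N r := by
      by_cases hP' : P.Nonempty
      · refine ⟨P.inf' hP' (fun p => Dij r p.1 p.2 q / (‖u p.1 - u p.2‖ + 1)), ?_, ?_⟩
        · rw [Finset.lt_inf'_iff]
          intro p hp
          have := (Finset.mem_filter.1 hp).2.2
          positivity
        · intro t ht htδ i j hij
          rcases (hqf i j hij).lt_or_eq with hD0 | hD0
          · have hpP : (i, j) ∈ P := by simp [hP, hij, hD0]
            have hle : t ≤ Dij r i j q / (‖u i - u j‖ + 1) :=
              htδ.trans (Finset.inf'_le _ hpP)
            have : t * (‖u i - u j‖ + 1) ≤ Dij r i j q :=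
              (le_div_iff₀ (by positivity)).1 hle
            exact hnoncontactcase i j hij hD0 t ht this
          · exact hcontactcase i j hij hD0.symm t ht
      · refine ⟨1, one_pos, fun t ht _ i j hij => ?_⟩
        rcases (hqf i j hij).lt_or_eq with hD0 | hD0
        · exact absurd ⟨(i, j), by simp [hP, hij, hD0]⟩ hP'
        · exact hcontactcase i j hij hD0.symm t ht
    have hkey : ∀ t : ℝ, 0 < t → t ≤ δ → 2 * α * t * ⟪v, u⟫ ≤ t ^ 2 * ‖u‖ ^ 2 := by
      intro t ht htδ
      have hyQ := hδ t ht.le htδ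
      have h1 : dist (q + α • v) q ≤ dist (q + α • v) (q + t • u) := by
        rw [hdisteq]
        exact infDist_le_dist_of_mem hyQ
      rw [dist_eq_norm, dist_eq_norm] at h1
      have e1 : q + α • v - q = α • v := add_sub_cancel_left q _
      have e2 : q + α • v - (q + t • u) = α • v - t • u := by abel
      rw [e1, e2] at h1
      have hsq := pow_le_pow_left₀ (norm_nonneg _) h1 2
      have hexp := norm_sub_sq_real (α • v) (t • u)
      have hin : ⟪α • v, t • u⟫ = α * (t * ⟪v, u⟫) := by
        rw [real_inner_smul_left, real_inner_smul_right]
      have hnt : ‖t • u‖ ^ 2 = t ^ 2 * ‖u‖ ^ 2 := by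
        rw [norm_smul, Real.norm_of_nonneg ht.le, mul_pow]
      have h4 : 2 * ⟪α • v, t • u⟫ ≤ ‖t • u‖ ^ 2 := by linarith
      rw [hin, hnt] at h4
      have h5 : 2 * α * t * ⟪v, u⟫ = 2 * (α * (t * ⟪v, u⟫)) := by ring
      rw [h5]
      linarith
    by_contra hpos0
    push_neg at hpos0
    obtain ⟨t, ht, htδ, h3⟩ : ∃ t : ℝ, 0 < t ∧ t ≤ δ ∧ t * (‖u‖ ^ 2 + 1) ≤ α * ⟪v, u⟫ :=
      ⟨min δ (α * ⟪v, u⟫ / (‖u‖ ^ 2 + 1)), lt_min hδpos (by positivity), min_le_left _ _,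
        (le_div_iff₀ (by positivity)).1 (min_le_right _ _)⟩
    have h2 := hkey t ht htδ
    have h6 : t * ‖u‖ ^ 2 ≤ α * ⟪v, u⟫ - t := by linarith
    have h7 : t * (t * ‖u‖ ^ 2) ≤ t * (α * ⟪v, u⟫ - t) :=
      mul_le_mul_of_nonneg_left h6 ht.le
    have h8 : 0 < t * (α * ⟪v, u⟫) := mul_pos ht (mul_pos hα hpos0)
    have h9 : 0 < t * t := mul_pos ht ht
    nlinarith [h2, h7, h8, h9]
  exact ⟨Set.Subset.antisymm (fun v hv => hB (hD hv)) hC, Set.Subset.antisymm hA hB⟩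
end
end

section
/- Suppose that for all q ∈ Q and all nonnegative coefficients (α_ij) supported on contact pairs (D_ij(q)=0), the inverse triangle inequality Σ α_ij |G_ij(q)| ≤ γ |Σ α_ij G_ij(q)| holds with γ > 1, and that each Q_ij satisfies the prox-regularity inequality ⟨w, q̃-q⟩ ≤ (|w|/(2η₀))|q̃-q|² for all q,q̃ ∈ Q_ij and w ∈ N(Q_ij,q). Then Q = ∩_{i<j} Q_ij is η-prox-regular with η = η₀/γ, i.e., for all q ∈ Q, v ∈ N(Q,q), and q̃ ∈ Q: ⟨v, q̃-q⟩ ≤ (|v|/(2η)) |q̃-q|². -/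
open Metric RealInnerProductSpace

noncomputable section

lemma norm_eij {N : ℕ} {r : ℝ} (hr : 0 < r) {i j : Fin N} {q : Conf N}
    (hq : Dij r i j q = 0) : ‖eij i j q‖ = 1 := by
  have hu : ‖q j - q i‖ = 2 * r := by
    rw [norm_sub_rev]; unfold Dij at hq; linarith
  rw [eij, norm_smul, hu]
  simp only [norm_inv, Real.norm_eq_abs, abs_of_pos (by linarith : (0:ℝ) < 2*r)]
  field_simp

lemma norm_Gij {N : ℕ} {r : ℝ} (hr : 0 < r) {i j : Fin N} (hij : i ≠ j) {q : Conf N}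
    (hq : Dij r i j q = 0) : ‖Gij i j q‖ = Real.sqrt 2 := by
  have h2 : ‖Gij i j q‖ ^ 2 = 2 := by
    rw [PiLp.norm_sq_eq_of_L2]
    rw [← Finset.sum_subset (Finset.subset_univ ({i, j} : Finset (Fin N)))]
    · rw [Finset.sum_pair hij]
      simp [Gij, hij, Ne.symm hij, norm_eij hr hq]
      norm_num
    · intro k _ hk
      simp only [Finset.mem_insert, Finset.mem_singleton, not_or] at hk
      simp [Gij, hk.1, hk.2]
  nlinarith [norm_nonneg (Gij i j q), Real.sq_sqrt (by norm_num : (0:ℝ) ≤ 2),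
    Real.sqrt_nonneg 2, sq_nonneg (‖Gij i j q‖ - Real.sqrt 2)]

lemma neg_Gij_mem {N : ℕ} {r : ℝ} (hr : 0 < r) {i j : Fin N} (hij : i ≠ j) {q : Conf N}
    (hq : Dij r i j q = 0) :
    -Gij i j q ∈ proxNormalCone {p : Conf N | 0 ≤ Dij r i j p} q := by
  have hu : ‖q j - q i‖ = 2 * r := by
    rw [norm_sub_rev]; unfold Dij at hq; linarith
  have hu0 : ‖q j - q i‖ ≠ 0 := by rw [hu]; positivity
  have hqS : q ∈ {p : Conf N | 0 ≤ Dij r i j p} := le_of_eq hq.symm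
  refine ⟨r, hr, ⟨hqS, ?_⟩⟩
  set x : Conf N := q + r • -Gij i j q with hx
  have hxi : x i = q i + r • eij i j q := by
    simp [hx, Gij]
  have hxj : x j = q j - r • eij i j q := by
    simp [hx, Gij, Ne.symm hij, sub_eq_add_neg]
  have hxij : x j - x i = 0 := by
    rw [hxi, hxj, eij, smul_smul, hu]
    have : r * (2*r)⁻¹ = 2⁻¹ := by field_simp
    rw [this]
    module
  have hdxq : dist x q = r * Real.sqrt 2 := by
    rw [dist_eq_norm, hx, add_sub_cancel_left, norm_smul, norm_neg, norm_Gij hr hij hq,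
      Real.norm_eq_abs, abs_of_pos hr]
  have hlow : ∀ y ∈ {p : Conf N | 0 ≤ Dij r i j p}, r * Real.sqrt 2 ≤ dist x y := by
    intro y hy
    have h1 : ‖x - y‖ ^ 2 = ∑ k, ‖(x - y) k‖ ^ 2 := PiLp.norm_sq_eq_of_L2 _ _
    have h2 : ‖(x - y) i‖ ^ 2 + ‖(x - y) j‖ ^ 2 ≤ ∑ k, ‖(x - y) k‖ ^ 2 := by
      have h2' := Finset.sum_le_sum_of_subset_of_nonneg
        (f := fun k => ‖(x - y) k‖ ^ 2) (Finset.subset_univ ({i, j} : Finset (Fin N)))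
        (fun k _ _ => by positivity)
      rwa [Finset.sum_pair hij] at h2'
    have h3 : (x - y) i - (x - y) j = y j - y i := by
      have : (x - y) i - (x - y) j = (x i - x j) + (y j - y i) := by
        simp only [PiLp.sub_apply]; abel
      rw [this, ← neg_sub (x j) (x i), hxij]; abel
    have hy' : 0 ≤ Dij r i j y := hy
    have h4 : 2 * r ≤ ‖y j - y i‖ := by
      rw [norm_sub_rev]; unfold Dij at hy'; linarith
    have h5 : ‖(x - y) i - (x - y) j‖ ≤ ‖(x - y) i‖ + ‖(x - y) j‖ := norm_sub_le _ _
    rw [h3] at h5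
    have hsum : ‖(x - y) i‖ ^ 2 + ‖(x - y) j‖ ^ 2 ≤ ‖x - y‖ ^ 2 := by rw [h1]; exact h2
    have h45 : 2 * r ≤ ‖(x - y) i‖ + ‖(x - y) j‖ := le_trans h4 h5
    have h6 : 2 * r ^ 2 ≤ ‖x - y‖ ^ 2 := by
      nlinarith [hsum, h45, sq_nonneg (‖(x - y) i‖ - ‖(x - y) j‖), hr]
    rw [dist_eq_norm]
    nlinarith [norm_nonneg (x - y), Real.sq_sqrt (by norm_num : (0:ℝ) ≤ 2),
      Real.sqrt_nonneg 2, mul_pos hr (Real.sqrt_pos.mpr (by norm_num : (0:ℝ) < 2))]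
  rw [hdxq]
  refine le_antisymm ?_ (hdxq ▸ Metric.infDist_le_dist_of_mem hqS)
  by_contra h
  push_neg at h
  obtain ⟨y, hy, hlt⟩ := (Metric.infDist_lt_iff ⟨q, hqS⟩).mp h
  exact absurd hlt (not_lt.mpr (hlow y hy))

/-- If the inverse triangle inequality holds with constant `γ > 1` on contact pairs, each
`Q_{ij}` satisfies the `η₀`-prox-regularity inequality, and the proximal normal cone to
`Q` is `N_q`, then `Q = ∩ Q_{ij}` is `η`-prox-regular with `η = η₀/γ`, in the sense of
the variational inequality `⟨v, q̃ - q⟩ ≤ (‖v‖/(2η)) ‖q̃ - q‖²`. -/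
theorem isProxRegular_Qfeas_of_inverse_triangle (N : ℕ) (r : ℝ) (hr : 0 < r)
    (η₀ γ : ℝ) (hη₀ : 0 < η₀) (hγ : 1 < γ)
    (h_triangle : ∀ q ∈ Qfeas N r, ∀ lam : Fin N × Fin N → ℝ,
      (∀ p, 0 ≤ lam p) →
      (∀ p : Fin N × Fin N, p.1 < p.2 → 0 < Dij r p.1 p.2 q → lam p = 0) →
      ∑ p ∈ Finset.univ.filter (fun p : Fin N × Fin N => p.1 < p.2),
          lam p * ‖Gij p.1 p.2 q‖ ≤
        γ * ‖∑ p ∈ Finset.univ.filter (fun p : Fin N × Fin N => p.1 < p.2),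
              lam p • Gij p.1 p.2 q‖)
    (h_Qij : ∀ i j : Fin N, i < j →
      ∀ q ∈ {p : Conf N | 0 ≤ Dij r i j p},
      ∀ w ∈ proxNormalCone {p : Conf N | 0 ≤ Dij r i j p} q,
      ∀ qt ∈ {p : Conf N | 0 ≤ Dij r i j p},
        ⟪w, qt - q⟫ ≤ ‖w‖ / (2 * η₀) * ‖qt - q‖ ^ 2)
    (h_cone : ∀ q ∈ Qfeas N r, proxNormalCone (Qfeas N r) q = coneNq N r q) :
    ∀ q ∈ Qfeas N r, ∀ v ∈ proxNormalCone (Qfeas N r) q, ∀ qt ∈ Qfeas N r,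
      ⟪v, qt - q⟫ ≤ ‖v‖ / (2 * (η₀ / γ)) * ‖qt - q‖ ^ 2 := by
  intro q hq v hv qt hqt
  rw [h_cone q hq] at hv
  obtain ⟨lam, hlam0, hsupp, rfl⟩ := hv
  set S := Finset.univ.filter (fun p : Fin N × Fin N => p.1 < p.2) with hS
  have expand : ⟪(-∑ p ∈ S, lam p • Gij p.1 p.2 q : Conf N), qt - q⟫ =
      ∑ p ∈ S, lam p * ⟪-Gij p.1 p.2 q, qt - q⟫ := by
    rw [inner_neg_left, sum_inner, ← Finset.sum_neg_distrib]
    refine Finset.sum_congr rfl fun p _ => ?_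
    rw [real_inner_smul_left, inner_neg_left]
    ring
  rw [expand]
  have step1 : ∀ p ∈ S, lam p * ⟪-Gij p.1 p.2 q, qt - q⟫ ≤
      lam p * ‖Gij p.1 p.2 q‖ * (1 / (2 * η₀) * ‖qt - q‖ ^ 2) := by
    intro p hp
    have hplt : p.1 < p.2 := (Finset.mem_filter.mp hp).2
    rcases eq_or_lt_of_le (hq p.1 p.2 hplt) with hD | hD
    · have hmem := neg_Gij_mem hr (ne_of_lt hplt) hD.symm
      have hineq := h_Qij p.1 p.2 hplt q (hq p.1 p.2 hplt) (-Gij p.1 p.2 q) hmem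
        qt (hqt p.1 p.2 hplt)
      rw [norm_neg] at hineq
      calc lam p * ⟪-Gij p.1 p.2 q, qt - q⟫
          ≤ lam p * (‖Gij p.1 p.2 q‖ / (2 * η₀) * ‖qt - q‖ ^ 2) :=
            mul_le_mul_of_nonneg_left hineq (hlam0 p)
        _ = lam p * ‖Gij p.1 p.2 q‖ * (1 / (2 * η₀) * ‖qt - q‖ ^ 2) := by ring
    · rw [hsupp p hplt hD]
      simp
  have step2 : ∑ p ∈ S, lam p * ⟪-Gij p.1 p.2 q, qt - q⟫ ≤
      (∑ p ∈ S, lam p * ‖Gij p.1 p.2 q‖) * (1 / (2 * η₀) * ‖qt - q‖ ^ 2) := by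
    rw [Finset.sum_mul]
    exact Finset.sum_le_sum step1
  have step3 := h_triangle q hq lam hlam0 hsupp
  have hc : (0:ℝ) ≤ 1 / (2 * η₀) * ‖qt - q‖ ^ 2 := by positivity
  have step4 : (∑ p ∈ S, lam p * ‖Gij p.1 p.2 q‖) * (1 / (2 * η₀) * ‖qt - q‖ ^ 2) ≤
      (γ * ‖∑ p ∈ S, lam p • Gij p.1 p.2 q‖) * (1 / (2 * η₀) * ‖qt - q‖ ^ 2) :=
    mul_le_mul_of_nonneg_right step3 hc
  refine le_trans (le_trans step2 step4) (le_of_eq ?_)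
  rw [norm_neg, show 2 * (η₀ / γ) = (2 * η₀) / γ by ring, div_div_eq_mul_div]
  ring
end
end

section
/- For the hard-disk configuration space with N = 2 (two disks of radius r in ℝ²), the set Q = {(q₁,q₂) ∈ ℝ⁴ : |q₁ - q₂| ≥ 2r} is η-prox-regular with η = r√2, and this constant is exact: the Weingarten operator of ∂Q at any boundary point has eigenvalues 0 and √2/|q₂ - q₁| = 1/(r√2). -/
open Metric RealInnerProductSpace

noncomputable section

/-- The unit normal field `ν(q) = (e₁₂(q), -e₁₂(q))/√2` on the two-disk configuration
space (outward with respect to the complementary convex set). -/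
def nuField (q : Conf 2) : Conf 2 := (Real.sqrt 2)⁻¹ • (-Gij 0 1 q)

/-- The Weingarten operator `W_q(h) = -Dν(q)[h]`. -/
def Wein (q : Conf 2) (h : Conf 2) : Conf 2 := -(fderiv ℝ nuField q h)

/-! ### Auxiliary material -/

set_option maxHeartbeats 1000000
set_option synthInstance.maxHeartbeats 400000

section Aux

abbrev E2 := EuclideanSpace ℝ (Fin 2)

lemma sqrt2_pos : (0:ℝ) < Real.sqrt 2 := Real.sqrt_pos.2 (by norm_num)

lemma sq_sqrt2 : Real.sqrt 2 * Real.sqrt 2 = 2 := Real.mul_self_sqrt (by norm_num)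

/-- derivative of the norm away from 0 -/
lemma hasFDerivAt_norm' (x : E2) (hx : x ≠ 0) :
    HasFDerivAt (fun y : E2 => ‖y‖) (‖x‖⁻¹ • innerSL ℝ x) x := by
  have h1 : HasFDerivAt (fun y : E2 => ‖y‖^2) (2 • (innerSL ℝ x)) x :=
    (hasStrictFDerivAt_norm_sq x).hasFDerivAt
  have hx0 : (0:ℝ) < ‖x‖ := norm_pos_iff.2 hx
  have h2 : HasDerivAt Real.sqrt (1 / (2 * Real.sqrt (‖x‖^2))) (‖x‖^2) :=
    Real.hasDerivAt_sqrt (by positivity)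
  have h3 := h2.comp_hasFDerivAt x h1
  have heq : (Real.sqrt ∘ fun y : E2 => ‖y‖ ^ 2) = fun y : E2 => ‖y‖ := by
    funext y; simp [Function.comp, Real.sqrt_sq (norm_nonneg y)]
  rw [heq] at h3
  refine h3.congr_fderiv ?_
  symm
  apply ContinuousLinearMap.ext; intro y
  simp [Real.sqrt_sq hx0.le]
  ring

/-- derivative of the normalization map `x ↦ ‖x‖⁻¹ • x` -/
def gDeriv (x : E2) : E2 →L[ℝ] E2 :=
  ‖x‖⁻¹ • ContinuousLinearMap.id ℝ E2 + (-(‖x‖^3)⁻¹) • ((innerSL ℝ x).smulRight x)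

lemma gDeriv_apply (x h : E2) : gDeriv x h = ‖x‖⁻¹ • h - ((‖x‖^3)⁻¹ * ⟪x, h⟫) • x := by
  simp [gDeriv, sub_eq_add_neg, smul_smul, neg_smul]

lemma hasFDerivAt_g (x : E2) (hx : x ≠ 0) :
    HasFDerivAt (fun y : E2 => ‖y‖⁻¹ • y) (gDeriv x) x := by
  have hx0 : (0:ℝ) < ‖x‖ := norm_pos_iff.2 hx
  have hinv : HasDerivAt (fun t : ℝ => t⁻¹) (-(‖x‖^2)⁻¹) ‖x‖ := by
    simpa using hasDerivAt_inv hx0.ne'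
  have h1 := (hinv.comp_hasFDerivAt x (hasFDerivAt_norm' x hx)).smul (hasFDerivAt_id x)
  refine h1.congr_fderiv ?_
  symm
  apply ContinuousLinearMap.ext; intro y
  rw [gDeriv]
  simp only [ContinuousLinearMap.add_apply, ContinuousLinearMap.smul_apply,
    ContinuousLinearMap.id_apply, ContinuousLinearMap.smulRight_apply,
    Function.comp, id, innerSL_apply_apply, smul_smul]
  have hc : (-(‖x‖ ^ 3)⁻¹ * ⟪x, y⟫ : ℝ) = (-(‖x‖ ^ 2)⁻¹ * ‖x‖⁻¹) • ⟪x, y⟫ := by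
    rw [smul_eq_mul]; field_simp
  rw [hc]

/-- the difference map `h ↦ h 1 - h 0` as a linear map -/
def DlinAux : Conf 2 →ₗ[ℝ] E2 where
  toFun h := h 1 - h 0
  map_add' x y := by
    show (x 1 + y 1) - (x 0 + y 0) = (x 1 - x 0) + (y 1 - y 0)
    abel
  map_smul' c x := by
    show (c • x 1) - (c • x 0) = c • (x 1 - x 0)
    rw [smul_sub]

def DL : Conf 2 →L[ℝ] E2 := DlinAux.toContinuousLinearMap

@[simp] lemma DL_apply (h : Conf 2) : DL h = h 1 - h 0 := rfl

/-- signs for the two slots -/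
def sgn2 (k : Fin 2) : ℝ := if k = 0 then 1 else -1

/-- the symmetrized embedding `x ↦ ((√2)⁻¹x, -(√2)⁻¹x)` as a linear map -/
def AlinAux : E2 →ₗ[ℝ] Conf 2 where
  toFun x := WithLp.toLp 2 (fun k => ((Real.sqrt 2)⁻¹ * sgn2 k) • x)
  map_add' x y := by ext k; simp [smul_add]
  map_smul' c x := by ext k; simp [smul_smul]; ring_nf; simp

def AL : E2 →L[ℝ] Conf 2 := AlinAux.toContinuousLinearMap

lemma AL_apply (x : E2) (k : Fin 2) : AL x k = ((Real.sqrt 2)⁻¹ * sgn2 k) • x := rfl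

lemma DL_AL (x : E2) : DL (AL x) = -(Real.sqrt 2 • x) := by
  have h2 : ((Real.sqrt 2)⁻¹ * (-1) : ℝ) - ((Real.sqrt 2)⁻¹ * 1) = -Real.sqrt 2 := by
    have hs := sq_sqrt2
    have hpos := sqrt2_pos
    field_simp
    nlinarith
  have e1 : sgn2 1 = -1 := rfl
  have e0 : sgn2 0 = 1 := rfl
  rw [DL_apply, AL_apply, AL_apply, e0, e1, ← sub_smul, h2, neg_smul]

lemma nuField_eq : nuField = fun q : Conf 2 => AL (‖DL q‖⁻¹ • (DL q)) := by
  funext q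
  ext k
  fin_cases k <;>
    simp [nuField, Gij, eij, AL_apply, sgn2, Fin.isValue, neg_smul, smul_smul] <;> ring

end Aux

section Aux2

lemma hasFDerivAt_nuField (q : Conf 2) (hd : DL q ≠ 0) :
    HasFDerivAt nuField (AL.comp ((gDeriv (DL q)).comp DL)) q := by
  rw [nuField_eq]
  exact AL.hasFDerivAt.comp q ((hasFDerivAt_g (DL q) hd).comp q DL.hasFDerivAt)

lemma wein_apply (q : Conf 2) (hd : DL q ≠ 0) (h : Conf 2) :
    Wein q h = -(AL (gDeriv (DL q) (DL h))) := by
  rw [Wein, (hasFDerivAt_nuField q hd).fderiv]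
  rfl

/-- inner product with the normal field, in terms of the difference vector -/
lemma nu_inner (q h : Conf 2) :
    ⟪nuField q, h⟫ = -((Real.sqrt 2)⁻¹ * ‖DL q‖⁻¹) * ⟪DL q, DL h⟫ := by
  rw [nuField_eq]
  rw [PiLp.inner_apply]
  rw [Fin.sum_univ_two]
  simp only [AL_apply, DL_apply, sgn2, real_inner_smul_left, inner_sub_right (𝕜 := ℝ)]
  norm_num
  ring

/-- tangency in terms of the difference vector -/
lemma tangent_iff (q : Conf 2) (hd : DL q ≠ 0) (h : Conf 2) (ht : ⟪nuField q, h⟫ = 0) :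
    ⟪DL q, DL h⟫ = 0 := by
  rw [nu_inner] at ht
  have hco : -((Real.sqrt 2)⁻¹ * ‖DL q‖⁻¹) ≠ 0 := by
    have h1 : ‖DL q‖ ≠ 0 := norm_ne_zero_iff.2 hd
    exact neg_ne_zero.2 (mul_ne_zero (inv_ne_zero sqrt2_pos.ne') (inv_ne_zero h1))
  exact (mul_eq_zero.1 ht).resolve_left hco

lemma wein_tangent (q : Conf 2) (hd : DL q ≠ 0) (h : Conf 2) (ht : ⟪DL q, DL h⟫ = 0) :
    Wein q h = -(AL (‖DL q‖⁻¹ • DL h)) := by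
  rw [wein_apply q hd, gDeriv_apply, ht]
  simp

end Aux2

section Aux3

/-- the antisymmetric coordinate `w(z) = (z₀ - z₁)/√2` -/
def wmap (z : Conf 2) : E2 := (Real.sqrt 2)⁻¹ • (z 0 - z 1)

lemma wmap_add (x y : Conf 2) : wmap (x + y) = wmap x + wmap y := by
  simp only [wmap]
  rw [← smul_add]
  congr 1
  show (x 0 + y 0) - (x 1 + y 1) = _
  abel

lemma wmap_smul (c : ℝ) (x : Conf 2) : wmap (c • x) = c • wmap x := by
  simp only [wmap]
  rw [smul_comm]
  congr 1
  show (c • x 0) - (c • x 1) = _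
  rw [smul_sub]

lemma wmap_sub (x y : Conf 2) : wmap (x - y) = wmap x - wmap y := by
  have h := wmap_add (x - y) y
  rw [sub_add_cancel] at h
  rw [h]; abel

lemma conf_norm_sq (z : Conf 2) : ‖z‖ ^ 2 = ‖z 0‖ ^ 2 + ‖z 1‖ ^ 2 := by
  rw [PiLp.norm_sq_eq_of_L2, Fin.sum_univ_two]

lemma wmap_norm (z : Conf 2) : ‖wmap z‖ = (Real.sqrt 2)⁻¹ * ‖z 0 - z 1‖ := by
  rw [wmap, norm_smul, Real.norm_eq_abs, abs_of_pos (inv_pos.2 sqrt2_pos)]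

lemma wmap_norm_le (z : Conf 2) : ‖wmap z‖ ≤ ‖z‖ := by
  rw [wmap_norm]
  have h1 : ‖z 0 - z 1‖ ≤ ‖z 0‖ + ‖z 1‖ := norm_sub_le _ _
  have h2 := conf_norm_sq z
  have h3 : ‖z 0‖ + ‖z 1‖ ≤ Real.sqrt 2 * ‖z‖ := by
    nlinarith [norm_nonneg (z 0), norm_nonneg (z 1), norm_nonneg z, sq_sqrt2, sqrt2_pos,
      sq_nonneg (‖z 0‖ - ‖z 1‖), mul_nonneg sqrt2_pos.le (norm_nonneg z)]
  rw [inv_mul_le_iff₀ sqrt2_pos]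
  linarith

lemma mem_iff_wmap (r : ℝ) (z : Conf 2) :
    z ∈ {q : Conf 2 | 2 * r ≤ ‖q 0 - q 1‖} ↔ r * Real.sqrt 2 ≤ ‖wmap z‖ := by
  rw [Set.mem_setOf_eq, wmap_norm]
  rw [le_inv_mul_iff₀ sqrt2_pos]
  have hrr : Real.sqrt 2 * (r * Real.sqrt 2) = 2 * r := by
    linear_combination r * sq_sqrt2
  rw [hrr]

/-- embedding of an antisymmetric direction -/
def iota (u : E2) : Conf 2 :=
  WithLp.toLp 2 (fun k : Fin 2 => (if k = 0 then ((Real.sqrt 2)⁻¹ : ℝ) else -(Real.sqrt 2)⁻¹) • u)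

lemma wmap_iota (u : E2) : wmap (iota u) = u := by
  rw [wmap]
  show (Real.sqrt 2)⁻¹ • ((Real.sqrt 2)⁻¹ • u - (-(Real.sqrt 2)⁻¹) • u) = u
  rw [← sub_smul, smul_smul]
  have : ((Real.sqrt 2)⁻¹ - -(Real.sqrt 2)⁻¹ : ℝ) = 2 * (Real.sqrt 2)⁻¹ := by ring
  rw [this]
  have h2 : ((Real.sqrt 2)⁻¹ * (2 * (Real.sqrt 2)⁻¹) : ℝ) = 1 := by
    field_simp
    exact (Real.sq_sqrt (by norm_num)).symm
  rw [h2, one_smul]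

lemma iota_norm (u : E2) : ‖iota u‖ = ‖u‖ := by
  have h := conf_norm_sq (iota u)
  have h0 : (iota u) 0 = (Real.sqrt 2)⁻¹ • u := by simp [iota]
  have h1 : (iota u) 1 = (-(Real.sqrt 2)⁻¹ : ℝ) • u := by simp [iota]
  rw [h0, h1, norm_smul, norm_smul] at h
  simp only [Real.norm_eq_abs] at h
  have ha : |(Real.sqrt 2)⁻¹| = (Real.sqrt 2)⁻¹ := abs_of_pos (inv_pos.2 sqrt2_pos)
  have hb : |(-(Real.sqrt 2)⁻¹ : ℝ)| = (Real.sqrt 2)⁻¹ := by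
    rw [abs_neg]; exact ha
  rw [ha, hb] at h
  have hsq : ‖iota u‖ ^ 2 = ‖u‖ ^ 2 := by
    rw [h]
    have h2 : ((Real.sqrt 2)⁻¹ : ℝ) ^ 2 = 2⁻¹ := by
      rw [← Real.sqrt_inv]
      exact Real.sq_sqrt (by norm_num)
    rw [mul_pow, h2]
    ring
  calc ‖iota u‖ = Real.sqrt (‖iota u‖ ^ 2) := (Real.sqrt_sq (norm_nonneg _)).symm
    _ = Real.sqrt (‖u‖ ^ 2) := by rw [hsq]
    _ = ‖u‖ := Real.sqrt_sq (norm_nonneg _)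

end Aux3

section Aux4

lemma cont_gap : Continuous fun q : Conf 2 => ‖q 0 - q 1‖ := by
  have h : (fun q : Conf 2 => ‖q 0 - q 1‖) = fun q : Conf 2 => ‖-(DL q)‖ := by
    funext q; rw [norm_neg, DL_apply, norm_sub_rev]
  rw [h]
  exact DL.continuous.neg.norm

lemma frontier_gap (r : ℝ) (x : Conf 2)
    (hx : x ∈ frontier {q : Conf 2 | 2 * r ≤ ‖q 0 - q 1‖}) : ‖x 0 - x 1‖ = 2 * r := by
  have hcl : IsClosed {q : Conf 2 | 2 * r ≤ ‖q 0 - q 1‖} :=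
    isClosed_le continuous_const cont_gap
  have h1 : x ∈ {q : Conf 2 | 2 * r ≤ ‖q 0 - q 1‖} :=
    hcl.closure_subset (hx.1)
  have h2 : x ∈ closure {q : Conf 2 | 2 * r ≤ ‖q 0 - q 1‖}ᶜ := by
    rw [closure_compl]
    exact hx.2
  have h3 : x ∈ {q : Conf 2 | ‖q 0 - q 1‖ ≤ 2 * r} := by
    have hcl2 : IsClosed {q : Conf 2 | ‖q 0 - q 1‖ ≤ 2 * r} :=
      isClosed_le cont_gap continuous_const
    refine hcl2.closure_subset (closure_mono ?_ h2)
    intro z hz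
    simp only [Set.mem_compl_iff, Set.mem_setOf_eq, not_le] at hz
    exact le_of_lt hz
  exact le_antisymm h3 h1

/-- the prox-regularity half -/
lemma prox_half (r : ℝ) (hr : 0 < r) :
    IsProxRegular {q : Conf 2 | 2 * r ≤ ‖q 0 - q 1‖} (r * Real.sqrt 2) := by
  intro x hx v hv hv1
  set S := {q : Conf 2 | 2 * r ≤ ‖q 0 - q 1‖} with hS
  set R : ℝ := r * Real.sqrt 2 with hR
  have hRpos : 0 < R := mul_pos hr sqrt2_pos
  obtain ⟨α, hα, hxm, hdist⟩ := hv
  set p : Conf 2 := x + α • v with hp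
  -- basic facts
  have hdpx : dist p x = α := by
    rw [dist_eq_norm, hp, add_sub_cancel_left, norm_smul, Real.norm_eq_abs,
      abs_of_pos hα, hv1, mul_one]
  have hinf : Metric.infDist p S = α := by rw [← hdist, hdpx]
  have hlb : ∀ z ∈ S, α ≤ dist p z := by
    intro z hz
    rw [← hinf]
    exact Metric.infDist_le_dist_of_mem hz
  -- the w-coordinates
  have hwx : ‖wmap x‖ = R := by
    rw [wmap_norm, frontier_gap r x hx, hR]
    have hs := sq_sqrt2
    field_simp
    linear_combination (-1) * hs
  have hwp : wmap p = wmap x + α • wmap v := by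
    rw [hp, wmap_add, wmap_smul]
  -- ‖wmap p‖ < R (since p ∉ S)
  have hplt : ‖wmap p‖ < R := by
    by_contra hge
    push_neg at hge
    have hpS : p ∈ S := (mem_iff_wmap r p).2 (by rw [← hR]; exact hge)
    have := hlb p hpS
    rw [dist_self] at this
    linarith
  -- upper bound α ≤ R - ‖wmap p‖
  have hub : α ≤ R - ‖wmap p‖ := by
    by_cases hw0 : wmap p = 0
    · -- move distance R in any antisymmetric unit direction
      set u : E2 := EuclideanSpace.single 0 (1:ℝ) with hu
      have hun : ‖u‖ = 1 := by simp [hu]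
      set z : Conf 2 := p + R • iota u with hz
      have hwz : wmap z = R • u := by
        rw [hz, wmap_add, wmap_smul, wmap_iota, hw0, zero_add]
      have hzS : z ∈ S := by
        rw [mem_iff_wmap r, hwz, norm_smul, Real.norm_eq_abs, abs_of_pos hRpos, hun, mul_one]
      have hdz : dist p z = R := by
        rw [dist_eq_norm, hz]
        have : p - (p + R • iota u) = -(R • iota u) := by abel
        rw [this, norm_neg, norm_smul, Real.norm_eq_abs, abs_of_pos hRpos, iota_norm, hun,
          mul_one]
      have := hlb z hzS
      rw [hdz] at this
      rw [hw0, norm_zero]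
      linarith
    · set t : ℝ := ‖wmap p‖ with ht
      have htpos : 0 < t := norm_pos_iff.2 hw0
      set c : ℝ := (R - t) * t⁻¹ with hc
      have hcpos : 0 ≤ c := mul_nonneg (by linarith) (inv_pos.2 htpos).le
      set z : Conf 2 := p + c • iota (wmap p) with hz
      have hwz : wmap z = (1 + c) • wmap p := by
        rw [hz, wmap_add, wmap_smul, wmap_iota, add_smul, one_smul]
      have hnwz : ‖wmap z‖ = R := by
        rw [hwz, norm_smul, Real.norm_eq_abs, abs_of_pos (by linarith), ← ht, hc]
        field_simp
        ring
      have hzS : z ∈ S := by rw [mem_iff_wmap r, ← hR, hnwz]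
      have hdz : dist p z = R - t := by
        rw [dist_eq_norm, hz]
        have : p - (p + c • iota (wmap p)) = -(c • iota (wmap p)) := by abel
        rw [this, norm_neg, norm_smul, Real.norm_eq_abs, abs_of_nonneg hcpos, iota_norm, ← ht,
          hc]
        field_simp
      have := hlb z hzS
      rw [hdz] at this
      linarith
  -- triangle inequality chain forces equality
  have hwv1 : ‖wmap v‖ ≤ 1 := by rw [← hv1]; exact wmap_norm_le v
  have htri : R - α ≤ ‖wmap p‖ := by
    have h1 : ‖wmap x‖ ≤ ‖wmap p‖ + ‖α • wmap v‖ := by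
      calc ‖wmap x‖ = ‖wmap p - α • wmap v‖ := by rw [hwp]; congr 1; abel
        _ ≤ ‖wmap p‖ + ‖α • wmap v‖ := norm_sub_le _ _
    have h2 : ‖α • wmap v‖ ≤ α := by
      rw [norm_smul, Real.norm_eq_abs, abs_of_pos hα]
      nlinarith
    rw [hwx] at h1
    linarith
  have heq1 : ‖wmap p‖ = R - α := le_antisymm (by linarith) htri
  have heq2 : ‖α • wmap v‖ = α := by
    have h1 : ‖wmap x‖ ≤ ‖wmap p‖ + ‖α • wmap v‖ := by
      calc ‖wmap x‖ = ‖wmap p - α • wmap v‖ := by rw [hwp]; congr 1; abel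
        _ ≤ ‖wmap p‖ + ‖α • wmap v‖ := norm_sub_le _ _
    have h2 : ‖α • wmap v‖ ≤ α := by
      rw [norm_smul, Real.norm_eq_abs, abs_of_pos hα]
      nlinarith
    rw [hwx, heq1] at h1
    linarith
  -- inner product equality
  set X : E2 := wmap x with hX
  set Y : E2 := α • wmap v with hY
  have hXY : ⟪X, Y⟫ = -(R * α) := by
    have hexp : ‖X + Y‖ ^ 2 = ‖X‖ ^ 2 + 2 * ⟪X, Y⟫ + ‖Y‖ ^ 2 := norm_add_sq_real X Y
    have hXYn : ‖X + Y‖ = R - α := by rw [← hwp, heq1]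
    rw [hXYn, hwx, heq2] at hexp
    nlinarith
  have hzero : X + R • wmap v = 0 := by
    have hkey : ‖α • X + R • Y‖ ^ 2 = 0 := by
      have hexp : ‖α • X + R • Y‖ ^ 2 =
          ‖α • X‖ ^ 2 + 2 * ⟪α • X, R • Y⟫ + ‖R • Y‖ ^ 2 := norm_add_sq_real _ _
      rw [real_inner_smul_left, real_inner_smul_right, hXY] at hexp
      rw [norm_smul, norm_smul, Real.norm_eq_abs, Real.norm_eq_abs, abs_of_pos hα,
        abs_of_pos hRpos, hwx, heq2] at hexp
      rw [hexp]; ring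
    have hz2 : α • X + R • Y = 0 := by
      have := pow_eq_zero_iff (n := 2) (by norm_num) |>.1 hkey
      exact norm_eq_zero.1 this
    have hz3 : α • (X + R • wmap v) = 0 := by
      rw [smul_add, smul_comm α R (wmap v), ← hY]
      exact hz2
    rcases smul_eq_zero.1 hz3 with h | h
    · exact absurd h hα.ne'
    · exact h
  -- conclusion
  ext y
  simp only [Set.mem_inter_iff, Metric.mem_ball, Set.mem_empty_iff_false, iff_false, not_and]
  intro hyb hyS
  have hyw : R ≤ ‖wmap y‖ := (mem_iff_wmap r y).1 hyS
  have hcalc : wmap (y - (x + R • v)) = wmap y := by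
    rw [wmap_sub, wmap_add, wmap_smul, ← hX, hzero, sub_zero]
  have : ‖wmap y‖ ≤ ‖y - (x + R • v)‖ := by rw [← hcalc]; exact wmap_norm_le _
  rw [← dist_eq_norm] at this
  have := lt_of_le_of_lt this hyb
  linarith

end Aux4

/-- For two disks of radius `r` in the plane, `Q = {‖q₁ - q₂‖ ≥ 2r}` is `r√2`-prox-regular,
and this constant is exact: at each boundary point, `ν` is differentiable and the
Weingarten operator has eigenvalues `0` and `√2/‖q₂ - q₁‖ = 1/(r√2)` on the tangent
space (indeed `W ∘ W = (1/(r√2)) W` there, with both eigenvalues attained). -/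
theorem two_disks_proxRegular_exact (r : ℝ) (hr : 0 < r) :
    IsProxRegular {q : Conf 2 | 2 * r ≤ ‖q 0 - q 1‖} (r * Real.sqrt 2) ∧
    ∀ q ∈ frontier {q : Conf 2 | 2 * r ≤ ‖q 0 - q 1‖},
      DifferentiableAt ℝ nuField q ∧
      (∀ h : Conf 2, ⟪nuField q, h⟫ = 0 →
        Wein q (Wein q h) = (1 / (r * Real.sqrt 2)) • Wein q h) ∧
      (∃ h : Conf 2, ⟪nuField q, h⟫ = 0 ∧ h ≠ 0 ∧ Wein q h = 0) ∧
      (∃ h : Conf 2, ⟪nuField q, h⟫ = 0 ∧ Wein q h ≠ 0) := by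
  refine ⟨prox_half r hr, ?_⟩
  intro q hq
  have hn : ‖q 0 - q 1‖ = 2 * r := frontier_gap r q hq
  have hnd : ‖DL q‖ = 2 * r := by rw [DL_apply, norm_sub_rev]; exact hn
  have hd : DL q ≠ 0 := by
    intro h0
    rw [h0, norm_zero] at hnd
    linarith
  refine ⟨(hasFDerivAt_nuField q hd).differentiableAt, ?_, ?_, ?_⟩
  · -- the eigenvalue identity
    intro h ht
    have ht' := tangent_iff q hd h ht
    have hW := wein_tangent q hd h ht'
    have hDW : DL (Wein q h) = (Real.sqrt 2 * ‖DL q‖⁻¹) • DL h := by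
      rw [hW, map_neg, DL_AL, neg_neg, smul_smul]
    have htW : ⟪DL q, DL (Wein q h)⟫ = 0 := by
      rw [hDW, real_inner_smul_right, ht', mul_zero]
    have hWW := wein_tangent q hd (Wein q h) htW
    rw [hWW, hDW, hW]
    rw [smul_smul, smul_neg, ← map_smul AL, smul_smul]
    have hsc : (‖DL q‖⁻¹ * (Real.sqrt 2 * ‖DL q‖⁻¹) : ℝ) = 1 / (r * Real.sqrt 2) * ‖DL q‖⁻¹ := by
      rw [hnd]
      have hs := sq_sqrt2
      have h2r : (2 * r : ℝ) ≠ 0 := by positivity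
      have hsr : (r * Real.sqrt 2 : ℝ) ≠ 0 := by positivity
      field_simp
      linear_combination hs
    rw [hsc]
  · -- the zero eigenvector
    refine ⟨(WithLp.toLp 2 (fun _ => DL q) : Conf 2), ?_, ?_, ?_⟩
    · rw [nu_inner]
      have : DL (WithLp.toLp 2 (fun _ => DL q) : Conf 2) = 0 := by
        rw [DL_apply]; exact sub_self _
      rw [this, inner_zero_right, mul_zero]
    · intro h0
      have := congrArg (fun z : Conf 2 => z 0) h0
      exact hd this
    · have hD0 : DL (WithLp.toLp 2 (fun _ => DL q) : Conf 2) = 0 := by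
        rw [DL_apply]; exact sub_self _
      rw [wein_apply q hd, hD0, map_zero, map_zero, neg_zero]
  · -- a nonzero image
    set d : E2 := DL q with hdd
    set f : E2 := (WithLp.toLp 2 (fun i : Fin 2 => if i = 0 then -(d 1) else d 0) : EuclideanSpace ℝ (Fin 2)) with hf
    have hdf : ⟪d, f⟫ = 0 := by
      rw [PiLp.inner_apply, Fin.sum_univ_two]
      simp [hf, RCLike.inner_apply, conj_trivial]
      ring
    have hfne : f ≠ 0 := by
      intro h0
      apply hd
      ext i
      fin_cases i
      · have := congrArg (fun z : E2 => z 1) h0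
        simpa [hf] using this
      · have := congrArg (fun z : E2 => z 0) h0
        have h2 : -(d 1) = 0 := by simpa [hf] using this
        simpa using h2
    set h : Conf 2 := AL f with hh
    have hDh : DL h = -(Real.sqrt 2 • f) := DL_AL f
    have hdDh : ⟪d, DL h⟫ = 0 := by
      rw [hDh, inner_neg_right, real_inner_smul_right, hdf, mul_zero, neg_zero]
    refine ⟨h, ?_, ?_⟩
    · rw [nu_inner, ← hdd, hdDh, mul_zero]
    · rw [wein_tangent q hd h hdDh, ← hdd, hDh]
      intro h0
      apply hfne
      have h1 := congrArg (fun z : Conf 2 => z 0) (neg_eq_zero.1 h0)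
      have h2 : ((Real.sqrt 2)⁻¹ * sgn2 0) • (‖d‖⁻¹ • -(Real.sqrt 2 • f)) = (0 : E2) := h1
      have hdn : ‖d‖ ≠ 0 := norm_ne_zero_iff.2 hd
      have e0 : sgn2 0 = 1 := rfl
      rw [e0, mul_one] at h2
      simp only [smul_neg, neg_eq_zero, smul_smul, smul_eq_zero] at h2
      rcases h2 with h2 | h2
      · exfalso
        have hne : ((Real.sqrt 2)⁻¹ * (‖d‖⁻¹ * Real.sqrt 2) : ℝ) ≠ 0 :=
          mul_ne_zero (inv_ne_zero sqrt2_pos.ne') (mul_ne_zero (inv_ne_zero hdn) sqrt2_pos.ne')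
        exact hne h2
      · exact h2
end
end
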